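/- arXiv:2311.11127 — 10 statements merged into one kernel-verified Lean document; each statement's English description precedes it below -/
import Mathlib

section
/- Let P be a set of prime numbers such that the sum of 1/√p over p ∈ P is finite. Then the set of real numbers α with α > 1, α not an integer, and such that the multiplicative submonoid B of ℝ generated by {(p : ℝ) : p ∈ P} ∪ {α} satisfies |x − y| ≥ 1 for all distinct x, y ∈ B, has positive Lebesgue measure (in particular, such α exist). -/
/-!
Let `S` be the monoid generated by `P`. The Euler product over the primes of `P` shows that
`C = ∑_{n ∈ S} n^{-1/2}` is finite. Every element of the monoid generated by `P ∪ {α}` has the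
form `n α^i` with `n ∈ S`, so it is `1`-separated as soon as `|n α^k - m| ≥ 1` for all `n, m ∈ S`
and `k ≥ 1`. For `α ∈ (2s², 4s²)` the set where `|n α^(k+1) - m| < 1` has length at most
`2 / (n (2s²)^k)` and is empty unless `m ≤ 4 n (2s)^(2k+2)`, so its length is at most
`8 s^(1-k) / √(n m)` (Rankin's trick). Summing over `n`, `m`, `k`, the exceptional set has measure
at most `16 C² s`, which is less than the length `2s²` of the interval once `s > 8C²`.
-/

open MeasureTheory Set

theorem Nat.ne_zero_and_primeFactors_subset_of_mem_closure {P : Set ℕ}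
    (hP : ∀ p ∈ P, p.Prime) {n : ℕ} (hn : n ∈ Submonoid.closure P) : n ≠ 0 ∧ ↑n.primeFactors ⊆ P := by
  induction hn using Submonoid.closure_induction with
  | mem p hp => simpa [(hP p hp).primeFactors] using ⟨(hP p hp).ne_zero, hp⟩
  | one => simp
  | mul a b _ _ ha hb =>
    refine ⟨mul_ne_zero ha.1 hb.1, ?_⟩
    rw [Nat.primeFactors_mul ha.1 hb.1, Finset.coe_union]
    exact union_subset ha.2 hb.2

theorem Real.inv_one_sub_le_exp {x : ℝ} (hx : x < 1) : (1 - x)⁻¹ ≤ Real.exp (x / (1 - x)) := by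
  have h : (1 - x)⁻¹ = x / (1 - x) + 1 := by field_simp [(sub_pos.2 hx).ne']; ring
  exact h ▸ Real.add_one_le_exp _

theorem summable_closure_of_summable_primes {P : Set ℕ} (hP : ∀ p ∈ P, p.Prime) {f : ℕ →* ℝ}
    (hf₀ : ∀ n, 0 ≤ f n) {c : ℝ} (hc : c < 1) (hfc : ∀ p : ℕ, p.Prime → f p ≤ c)
    (hsum : Summable fun p : P => f p) :
    Summable fun n : Submonoid.closure P => f n := by
  classical
  refine summable_of_sum_le (c := Real.exp ((∑' p : P, f p) / (1 - c))) (fun n => hf₀ n)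
    fun u => ?_
  set F := u.biUnion fun n => (n : ℕ).primeFactors
  have hFP : ∀ p ∈ F, p ∈ P := by
    simp only [F, Finset.mem_biUnion]
    rintro p ⟨n, -, hp⟩
    exact (Nat.ne_zero_and_primeFactors_subset_of_mem_closure hP n.2).2 hp
  have huF : ∀ n ∈ u, (n : ℕ) ∈ Nat.factoredNumbers F := fun n hn =>
    Nat.mem_factoredNumbers_of_primeFactors_subset
      (Nat.ne_zero_and_primeFactors_subset_of_mem_closure hP n.2).1
      (Finset.subset_biUnion_of_mem (fun n : Submonoid.closure P => (n : ℕ).primeFactors) hn)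
  obtain ⟨-, hF⟩ := EulerProduct.summable_and_hasSum_factoredNumbers_prod_filter_prime_geometric
    (f := f) (fun hp => by rw [Real.norm_of_nonneg (hf₀ _)]; exact (hfc _ hp).trans_lt hc) F
  calc ∑ n ∈ u, f n = ∑' n : u, f n := (Finset.tsum_subtype u fun n => f n).symm
    _ ≤ ∑' m : Nat.factoredNumbers F, f m :=
        Summable.tsum_le_tsum_of_inj (fun n => ⟨n, huF n n.2⟩)
          (fun a b h => Subtype.ext (Subtype.ext (Subtype.mk.inj h)))
          (fun m _ => hf₀ m) (fun _ => le_rfl) (u.summable fun n => f n) hF.summable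
    _ = ∏ p ∈ F with p.Prime, (1 - f p)⁻¹ := hF.tsum_eq
    _ ≤ ∏ p ∈ F with p.Prime, Real.exp (f p / (1 - c)) := by
        refine Finset.prod_le_prod (fun p hp => ?_) (fun p hp => ?_)
        · exact inv_nonneg.2 (sub_nonneg.2 ((hfc p (Finset.mem_filter.1 hp).2).trans hc.le))
        · have hp := hfc p (Finset.mem_filter.1 hp).2
          calc (1 - f p)⁻¹ ≤ Real.exp (f p / (1 - f p)) := Real.inv_one_sub_le_exp (hp.trans_lt hc)
            _ ≤ Real.exp (f p / (1 - c)) := by gcongr; exact hf₀ p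
    _ = Real.exp ((∑ p ∈ F with p.Prime, f p) / (1 - c)) := by
        rw [← Real.exp_sum, Finset.sum_div]
    _ ≤ Real.exp ((∑' p : P, f p) / (1 - c)) := by
        gcongr
        rw [tsum_subtype]
        refine ((Finset.sum_congr rfl fun p hp => ?_).trans_le
          (Summable.sum_le_tsum _ (fun _ _ => indicator_nonneg (fun n _ => hf₀ n) _)
            (summable_subtype_iff_indicator.1 hsum)))
        exact (indicator_of_mem (hFP p (Finset.mem_filter.1 hp).1) _).symm

noncomputable def invSqrtHom : ℕ →* ℝ where
  toFun n := 1 / √n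
  map_one' := by simp
  map_mul' m n := by
    rw [Nat.cast_mul, Real.sqrt_mul (Nat.cast_nonneg m), one_div_mul_one_div]

theorem summable_one_div_sqrt_closure {P : Set ℕ} (hP : ∀ p ∈ P, p.Prime)
    (hsum : Summable fun p : P => 1 / √(p : ℝ)) :
    Summable fun n : Submonoid.closure P => 1 / √(n : ℝ) :=
  summable_closure_of_summable_primes hP (f := invSqrtHom)
    (fun _ => one_div_nonneg.2 (Real.sqrt_nonneg _)) (c := 1 / √2)
    ((div_lt_one (by positivity)).2 Real.one_lt_sqrt_two)
    (fun p hp => one_div_le_one_div_of_le (by positivity)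
      (Real.sqrt_le_sqrt (by exact_mod_cast hp.two_le))) hsum

theorem Submonoid.exists_mul_pow_eq_of_mem_closure_union_singleton {M : Type*} [CommMonoid M]
    {s : Set M} {a x : M} (hx : x ∈ closure (s ∪ {a})) :
    ∃ y ∈ closure s, ∃ j : ℕ, y * a ^ j = x := by
  rw [closure_union, mem_sup] at hx
  obtain ⟨y, hy, z, hz, rfl⟩ := hx
  obtain ⟨j, rfl⟩ := mem_closure_singleton.1 hz
  exact ⟨y, hy, j, rfl⟩

theorem Nat.one_le_abs_cast_sub_cast {n m : ℕ} (h : n ≠ m) : 1 ≤ |(n : ℝ) - m| := by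
  have : (1 : ℤ) ≤ |(n : ℤ) - m| := Int.one_le_abs (sub_ne_zero.2 (by exact_mod_cast h))
  exact_mod_cast this

theorem one_le_abs_mul_pow_sub_mul_pow {S : Set ℕ} {α : ℝ} (hα : 1 ≤ α)
    (hS : ∀ n ∈ S, ∀ m ∈ S, ∀ k : ℕ, 1 ≤ |(n : ℝ) * α ^ (k + 1) - m|)
    {n m : ℕ} (hn : n ∈ S) (hm : m ∈ S) {i j : ℕ} (hne : (n : ℝ) * α ^ i ≠ m * α ^ j) :
    1 ≤ |(n : ℝ) * α ^ i - m * α ^ j| := by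
  wlog hij : i ≤ j generalizing n m i j
  · rw [abs_sub_comm]; exact this hm hn hne.symm (le_of_not_ge hij)
  obtain ⟨d, rfl⟩ := Nat.exists_eq_add_of_le hij
  have hαi : 1 ≤ α ^ i := one_le_pow₀ hα
  have hαi0 : 0 ≤ α ^ i := zero_le_one.trans hαi
  rcases d with _ | k
  · have hnm : n ≠ m := by rintro rfl; exact hne rfl
    calc (1 : ℝ) ≤ α ^ i * |(n : ℝ) - m| :=
          one_le_mul_of_one_le_of_one_le hαi (Nat.one_le_abs_cast_sub_cast hnm)
      _ = _ := by rw [← abs_of_nonneg hαi0, ← abs_mul, abs_of_nonneg hαi0]; ring_nf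
  · calc (1 : ℝ) ≤ α ^ i * |(m : ℝ) * α ^ (k + 1) - n| :=
          one_le_mul_of_one_le_of_one_le hαi (hS m hm n hn k)
      _ = _ := by rw [← abs_of_nonneg hαi0, ← abs_mul, abs_sub_comm, abs_of_nonneg hαi0]; ring_nf

theorem one_le_abs_sub_of_mem_closure {P : Set ℕ} {α : ℝ} (hα : 1 ≤ α)
    (hP : ∀ n ∈ Submonoid.closure P, ∀ m ∈ Submonoid.closure P, ∀ k : ℕ,
      1 ≤ |(n : ℝ) * α ^ (k + 1) - m|) :
    ∀ x ∈ Submonoid.closure ((((↑) : ℕ → ℝ) '' P) ∪ {α}),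
      ∀ y ∈ Submonoid.closure ((((↑) : ℕ → ℝ) '' P) ∪ {α}), x ≠ y → 1 ≤ |x - y| := by
  have hcast : Submonoid.closure (((↑) : ℕ → ℝ) '' P) =
      (Submonoid.closure P).map (Nat.castRingHom ℝ : ℕ →* ℝ) :=
    (MonoidHom.map_mclosure (Nat.castRingHom ℝ : ℕ →* ℝ) P).symm
  intro x hx y hy hxy
  obtain ⟨x', hx', i, rfl⟩ := Submonoid.exists_mul_pow_eq_of_mem_closure_union_singleton hx
  obtain ⟨y', hy', j, rfl⟩ := Submonoid.exists_mul_pow_eq_of_mem_closure_union_singleton hy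
  rw [hcast, Submonoid.mem_map] at hx' hy'
  obtain ⟨n, hn, rfl⟩ := hx'
  obtain ⟨m, hm, rfl⟩ := hy'
  exact one_le_abs_mul_pow_sub_mul_pow hα hP hn hm hxy

theorem pow_mul_sub_le_pow_succ_sub_pow_succ {R : Type*} [CommRing R] [LinearOrder R]
    [IsStrictOrderedRing R] {a β γ : R} (ha : 0 ≤ a) (haβ : a ≤ β) (hβγ : β ≤ γ) (k : ℕ) :
    a ^ k * (γ - β) ≤ γ ^ (k + 1) - β ^ (k + 1) := by
  have hak : a ^ k ≤ β ^ k := pow_le_pow_left₀ ha haβ k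
  have hβk : β ^ k ≤ γ ^ k := pow_le_pow_left₀ (ha.trans haβ) hβγ k
  have hγ : 0 ≤ γ := (ha.trans haβ).trans hβγ
  calc a ^ k * (γ - β) ≤ β ^ k * (γ - β) := mul_le_mul_of_nonneg_right hak (sub_nonneg.2 hβγ)
    _ ≤ γ ^ k * γ - β ^ k * β := by nlinarith [mul_le_mul_of_nonneg_right hβk hγ]
    _ = γ ^ (k + 1) - β ^ (k + 1) := by ring

theorem volume_Ioi_inter_abs_mul_pow_sub_lt_one_le {a n : ℝ} (ha : 0 < a) (hn : 0 < n)
    (m : ℝ) (k : ℕ) :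
    volume (Ioi a ∩ {β | |n * β ^ (k + 1) - m| < 1}) ≤ ENNReal.ofReal (2 / (n * a ^ k)) := by
  refine (Real.volume_le_diam _).trans (Metric.ediam_le_of_forall_dist_le fun β hβ γ hγ => ?_)
  wlog hβγ : β ≤ γ generalizing β γ
  · rw [dist_comm]; exact this γ hγ β hβ (le_of_not_ge hβγ)
  obtain ⟨hβa, hβ⟩ := hβ
  obtain ⟨-, hγ⟩ := hγ
  rw [Real.dist_eq, abs_sub_comm, abs_of_nonneg (sub_nonneg.2 hβγ), le_div_iff₀ (by positivity)]
  have := pow_mul_sub_le_pow_succ_sub_pow_succ ha.le (le_of_lt hβa) hβγ k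
  rw [mem_ofPred_eq, abs_lt] at hβ hγ
  nlinarith

theorem volume_Ioo_inter_abs_mul_pow_sub_lt_one_le {s n m : ℝ} (hs : 1 ≤ s) (hn : 1 ≤ n)
    (hm : 0 < m) (k : ℕ) :
    volume (Ioo (2 * s ^ 2) (4 * s ^ 2) ∩ {β | |n * β ^ (k + 1) - m| < 1}) ≤
      ENNReal.ofReal (1 / √n * (1 / √m * (8 * s * s⁻¹ ^ k))) := by
  rcases (Ioo (2 * s ^ 2) (4 * s ^ 2) ∩ {β | |n * β ^ (k + 1) - m| < 1}).eq_empty_or_nonempty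
    with h | ⟨β, ⟨hβ₁, hβ₂⟩, hβ⟩
  · simp [h]
  have hs0 : 0 < s := by linarith
  have hn0 : 0 < n := by linarith
  have hm_le : √m ≤ 2 * √n * (2 * s) ^ (k + 1) := by
    rw [Real.sqrt_le_left (by positivity), mul_pow, mul_pow, Real.sq_sqrt hn0.le, ← pow_mul,
      mul_comm (k + 1) 2, pow_mul]
    have hβpow : β ^ (k + 1) ≤ ((2 * s) ^ 2) ^ (k + 1) :=
      pow_le_pow_left₀ (by nlinarith) (by nlinarith) _
    have hone : 1 ≤ ((2 * s) ^ 2) ^ (k + 1) := one_le_pow₀ (by nlinarith)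
    rw [mem_ofPred_eq, abs_lt] at hβ
    nlinarith
  refine (measure_mono (inter_subset_inter_left _ Ioo_subset_Ioi_self)).trans
    ((volume_Ioi_inter_abs_mul_pow_sub_lt_one_le (by positivity) hn0 m k).trans
      (ENNReal.ofReal_le_ofReal ?_))
  rw [show 1 / √n * (1 / √m * (8 * s * s⁻¹ ^ k)) = 8 * s / (√n * √m * s ^ k) by
    rw [inv_pow]; field_simp, div_le_div_iff₀ (by positivity) (by positivity)]
  calc 2 * (√n * √m * s ^ k) ≤ 2 * (√n * (2 * √n * (2 * s) ^ (k + 1)) * s ^ k) := by gcongr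
    _ = 8 * s * ((√n * √n) * ((2 * s) ^ k * s ^ k)) := by ring
    _ = 8 * s * (n * (2 * s ^ 2) ^ k) := by
      rw [Real.mul_self_sqrt hn0.le, ← mul_pow]; ring

theorem volume_Ioo_inter_iUnion_abs_mul_pow_sub_lt_one_le {S : Set ℕ} (hS : ∀ n ∈ S, 1 ≤ n)
    (hsum : Summable fun n : S => 1 / √(n : ℝ)) {s : ℝ} (hs : 2 ≤ s) :
    volume (Ioo (2 * s ^ 2) (4 * s ^ 2) ∩
        ⋃ (n : S) (m : S) (k : ℕ), {β | |(n : ℝ) * β ^ (k + 1) - m| < 1}) ≤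
      ENNReal.ofReal ((∑' n : S, 1 / √(n : ℝ)) ^ 2 * (16 * s)) := by
  have hs₀ : 0 ≤ s⁻¹ := by positivity
  have hs₁ : s⁻¹ < 1 := inv_lt_one_of_one_lt₀ (by linarith)
  have hw : ∑' n : S, ENNReal.ofReal (1 / √(n : ℝ)) = ENNReal.ofReal (∑' n : S, 1 / √(n : ℝ)) :=
    (ENNReal.ofReal_tsum_of_nonneg (fun _ => by positivity) hsum).symm
  have hg : ∑' k : ℕ, ENNReal.ofReal (8 * s * s⁻¹ ^ k) =
      ENNReal.ofReal (8 * s * (1 - s⁻¹)⁻¹) := by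
    rw [← ENNReal.ofReal_tsum_of_nonneg (fun _ => by positivity)
      ((summable_geometric_of_lt_one hs₀ hs₁).mul_left _), tsum_mul_left,
      tsum_geometric_of_lt_one hs₀ hs₁]
  have hgs : 8 * s * (1 - s⁻¹)⁻¹ ≤ 16 * s := by
    have : s⁻¹ ≤ 2⁻¹ := inv_anti₀ (by norm_num) hs
    have : (1 - s⁻¹)⁻¹ ≤ 2 := by rw [inv_le_comm₀ (by linarith) (by norm_num)]; linarith
    nlinarith
  rw [inter_iUnion]
  calc _ ≤ ∑' (n : S) (m : S) (k : ℕ), volume (Ioo (2 * s ^ 2) (4 * s ^ 2) ∩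
        {β | |(n : ℝ) * β ^ (k + 1) - m| < 1}) := by
        refine (measure_iUnion_le _).trans (ENNReal.tsum_le_tsum fun n => ?_)
        rw [inter_iUnion]
        refine (measure_iUnion_le _).trans (ENNReal.tsum_le_tsum fun m => ?_)
        rw [inter_iUnion]
        exact measure_iUnion_le _
    _ ≤ ∑' (n : S) (m : S) (k : ℕ), ENNReal.ofReal (1 / √(n : ℝ)) *
          (ENNReal.ofReal (1 / √(m : ℝ)) * ENNReal.ofReal (8 * s * s⁻¹ ^ k)) := by
        refine ENNReal.tsum_le_tsum fun n => ENNReal.tsum_le_tsum fun m =>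
          ENNReal.tsum_le_tsum fun k => ?_
        rw [← ENNReal.ofReal_mul (by positivity), ← ENNReal.ofReal_mul (by positivity)]
        exact volume_Ioo_inter_abs_mul_pow_sub_lt_one_le (by linarith) (by exact_mod_cast hS n n.2)
          (by exact_mod_cast hS m m.2) k
    _ = ENNReal.ofReal (∑' n : S, 1 / √(n : ℝ)) * (ENNReal.ofReal (∑' n : S, 1 / √(n : ℝ)) *
          ENNReal.ofReal (8 * s * (1 - s⁻¹)⁻¹)) := by
        simp only [ENNReal.tsum_mul_left, ENNReal.tsum_mul_right, hw, hg]
    _ ≤ _ := by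
        rw [← ENNReal.ofReal_mul (by positivity), ← ENNReal.ofReal_mul (by positivity)]
        refine ENNReal.ofReal_le_ofReal ?_
        rw [← mul_assoc, ← sq]
        gcongr

/-- **Theorem 2 (Ruzsa).** If `P` is a set of primes with `∑_{p ∈ P} 1/√p < ∞`, then the
set of non-integer reals `α > 1` for which the multiplicative monoid generated by
`P ∪ {α}` is `1`-separated has positive Lebesgue measure. -/
theorem stmt_1 (P : Set ℕ) (hP : ∀ p ∈ P, p.Prime)
    (hsum : Summable (fun p : P => 1 / Real.sqrt ((p : ℕ) : ℝ))) :
    0 < volume {α : ℝ | 1 < α ∧ α ∉ Set.range ((↑) : ℤ → ℝ) ∧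
      ∀ x ∈ Submonoid.closure ((((↑) : ℕ → ℝ) '' P) ∪ {α}),
        ∀ y ∈ Submonoid.closure ((((↑) : ℕ → ℝ) '' P) ∪ {α}),
          x ≠ y → 1 ≤ |x - y|} := by
  have hS : ∀ n ∈ Submonoid.closure P, 1 ≤ n := fun n hn =>
    Nat.one_le_iff_ne_zero.2 (Nat.ne_zero_and_primeFactors_subset_of_mem_closure hP hn).1
  set C := ∑' n : Submonoid.closure P, 1 / √(n : ℝ)
  set s := 8 * C ^ 2 + 2
  set U := ⋃ (n : Submonoid.closure P) (m : Submonoid.closure P) (k : ℕ),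
    {β : ℝ | |(n : ℝ) * β ^ (k + 1) - m| < 1}
  have hs : 2 ≤ s := le_add_of_nonneg_left (by positivity)
  have hbad : volume (Ioo (2 * s ^ 2) (4 * s ^ 2) ∩ U ∪ range ((↑) : ℤ → ℝ)) <
      volume (Ioo (2 * s ^ 2) (4 * s ^ 2)) := by
    calc _ ≤ volume (Ioo (2 * s ^ 2) (4 * s ^ 2) ∩ U) + volume (range ((↑) : ℤ → ℝ)) :=
          measure_union_le _ _
      _ ≤ ENNReal.ofReal (C ^ 2 * (16 * s)) := by
          rw [(countable_range _).measure_zero, add_zero]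
          exact volume_Ioo_inter_iUnion_abs_mul_pow_sub_lt_one_le hS
            (summable_one_div_sqrt_closure hP hsum) hs
      _ < _ := by
          rw [Real.volume_Ioo, ENNReal.ofReal_lt_ofReal_iff (by nlinarith)]
          nlinarith
  refine (tsub_pos_of_lt hbad).trans_le (le_measure_sdiff.trans (measure_mono ?_))
  rintro α ⟨hα, hαbad⟩
  have hα₁ : 1 < α := by nlinarith [hα.1]
  refine ⟨hα₁, fun h => hαbad (Or.inr h), one_le_abs_sub_of_mem_closure hα₁.le
    fun n hn m hm k => not_lt.1 fun h => hαbad (Or.inl ⟨hα, ?_⟩)⟩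
  exact mem_iUnion.2 ⟨⟨n, hn⟩, mem_iUnion.2 ⟨⟨m, hm⟩, mem_iUnion.2 ⟨k, h⟩⟩⟩
end

section
/- Let G′ be a set of real numbers greater than 1 such that the sum of 1/√g over g ∈ G′ is finite, and let B′ = B(G′) be the multiplicative submonoid of ℝ generated by G′. Assume that |x − y| ≥ δ for all distinct x, y ∈ B′, where δ > 0. Then the set of real numbers α with α > 1, α not an integer, and such that B(G′ ∪ {α}) is δ-separated, has positive Lebesgue measure (in particular, such α exist). -/
/-!
Separation of `B' = ⟨G'⟩` against `1` forces every generator to be `≥ 1 + δ`, so the Euler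
product `∏ (1 - g^(-1/2))⁻¹` converges and `W = ∑_{b ∈ B'} b^(-1/2)` is finite. Every element of
`⟨G' ∪ {α}⟩` is `b α^k` with `b ∈ B'`; cancelling the smaller power of `α ≥ 1`, separation can
only fail through `|b α^(m+1) - c| < δ` with `b, c ∈ B'`. For `α ∈ (N, 2N)` this confines `α` to
a set of diameter `≤ 2δ / (b N^m)`, empty unless `c ≤ 2 b (2N)^(m+1)`. Trading that condition
for the weight `(bc)^(-1/2)`, the exceptional sets have total measure `≤ 8 δ W² √N`, which is
less than the length `N` of the interval when `N` is large; the integers are a null set.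
-/

open MeasureTheory
open scoped ENNReal

namespace Submonoid

theorem one_le_of_mem_closure {R : Type*} [Semiring R] [PartialOrder R] [IsOrderedRing R]
    {S : Set R} (hS : ∀ g ∈ S, 1 ≤ g) {b : R} (hb : b ∈ closure S) : 1 ≤ b := by
  induction hb using closure_induction with
  | mem g hg => exact hS g hg
  | one => exact le_rfl
  | mul x y _ _ hx hy => exact one_le_mul_of_one_le_of_one_le hx hy

variable {M : Type*} [CommMonoid M]

theorem exists_pow_mul_of_mem_closure_insert {g x : M} {s : Set M}
    (hx : x ∈ closure (insert g s)) : ∃ k : ℕ, ∃ a ∈ closure s, g ^ k * a = x := by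
  rw [Set.insert_eq, closure_union, mem_sup] at hx
  obtain ⟨y, hy, a, ha, rfl⟩ := hx
  obtain ⟨k, rfl⟩ := mem_closure_singleton.1 hy
  exact ⟨k, a, ha, rfl⟩

theorem exists_finset_subset_of_subset_closure {S : Set M} {F : Finset M}
    (hF : (F : Set M) ⊆ closure S) :
    ∃ t : Finset M, (t : Set M) ⊆ S ∧ (F : Set M) ⊆ closure (t : Set M) := by
  classical
  choose! l hlS hl using fun x (hx : x ∈ F) => exists_list_of_mem_closure (hF hx)
  refine ⟨F.biUnion fun x => (l x).toFinset, fun y hy => ?_, fun x hx => ?_⟩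
  · obtain ⟨x, hx, hy⟩ := Finset.mem_biUnion.1 hy
    exact hlS x hx y (List.mem_toFinset.1 hy)
  · rw [← hl x hx]
    exact list_prod_mem _ fun y hy => subset_closure <|
      Finset.mem_biUnion.2 ⟨x, hx, List.mem_toFinset.2 hy⟩

variable (w : M →* ℝ≥0∞)

theorem tsum_closure_insert_le (g : M) (s : Set M) :
    ∑' x : closure (insert g s), w x ≤ (1 - w g)⁻¹ * ∑' a : closure s, w a := by
  let f : ℕ × closure s → closure (insert g s) := fun p =>
    ⟨g ^ p.1 * p.2, mul_mem (pow_mem (subset_closure (Set.mem_insert g s)) _)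
      (closure_mono (Set.subset_insert g s) p.2.2)⟩
  have hf : Function.Surjective f := by
    rintro ⟨x, hx⟩
    obtain ⟨k, a, ha, rfl⟩ := exists_pow_mul_of_mem_closure_insert hx
    exact ⟨(k, ⟨a, ha⟩), rfl⟩
  calc ∑' x : closure (insert g s), w x ≤ ∑' p, w (f p) :=
        ENNReal.tsum_le_tsum_comp_of_surjective hf _
    _ = ∑' (k : ℕ) (a : closure s), w g ^ k * w a := by
        rw [ENNReal.tsum_prod']
        simp [f]
    _ = (1 - w g)⁻¹ * ∑' a : closure s, w a := by
        simp only [ENNReal.tsum_mul_left, ENNReal.tsum_mul_right, ENNReal.tsum_geometric]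

theorem tsum_closure_finset_le (t : Finset M) :
    ∑' x : closure (t : Set M), w x ≤ ∏ g ∈ t, (1 - w g)⁻¹ := by
  classical
  induction t using Finset.induction_on with
  | empty =>
    rw [Finset.coe_empty, closure_empty,
      tsum_eq_single 1 fun x hx => absurd (Subtype.ext (mem_bot.1 x.2)) hx]
    simp
  | insert g t hg ih =>
    rw [Finset.coe_insert, Finset.prod_insert hg]
    exact (tsum_closure_insert_le w g t).trans (mul_le_mul_right ih _)

theorem tsum_closure_le_of_prod_le {S : Set M} {c : ℝ≥0∞}
    (h : ∀ t : Finset M, (t : Set M) ⊆ S → ∏ g ∈ t, (1 - w g)⁻¹ ≤ c) :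
    ∑' x : closure S, w x ≤ c := by
  rw [ENNReal.tsum_eq_iSup_sum]
  refine iSup_le fun F => ?_
  obtain ⟨t, htS, hFt⟩ := exists_finset_subset_of_subset_closure (F := F.map (.subtype _)) <| by
    intro _ hx
    obtain ⟨x, -, rfl⟩ := Finset.mem_map.1 hx
    exact x.2
  calc ∑ x ∈ F, w x = ∑' x : (F.map (.subtype _) : Set M), w x := by
        rw [Finset.tsum_subtype', Finset.sum_map]; rfl
    _ ≤ ∑' x : closure (t : Set M), w x := ENNReal.tsum_mono_subtype _ hFt
    _ ≤ c := (tsum_closure_finset_le w t).trans (h t htS)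

end Submonoid

/-- `x ↦ |x|^(-1/2)` (and `0 ↦ 0`); the absolute value makes it multiplicative on all of `ℝ`. -/
noncomputable def invSqrtAbs : ℝ →* ℝ≥0∞ where
  toFun x := ENNReal.ofReal (√|x|)⁻¹
  map_one' := by simp
  map_mul' x y := by
    rw [abs_mul, Real.sqrt_mul (abs_nonneg x), mul_inv, ENNReal.ofReal_mul (by positivity)]

theorem invSqrtAbs_apply (x : ℝ) : invSqrtAbs x = ENNReal.ofReal (√|x|)⁻¹ := rfl

theorem inv_one_sub_le_one_add_mul {x y : ℝ} (hy : 0 ≤ y) (hyx : y ≤ x) (hx : x < 1) :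
    (1 - y)⁻¹ ≤ 1 + (1 - x)⁻¹ * y := by
  have h1y : 0 < 1 - y := by linarith
  calc (1 - y)⁻¹ = 1 + y / (1 - y) := by field_simp; ring
    _ ≤ 1 + y / (1 - x) := by gcongr
    _ = 1 + (1 - x)⁻¹ * y := by rw [div_eq_inv_mul]

theorem tsum_invSqrtAbs_closure_ne_top {S : Set ℝ} {a : ℝ} (ha : 1 < a) (hS : ∀ g ∈ S, a ≤ g)
    (hsum : Summable fun g : S => 1 / √(g : ℝ)) :
    ∑' b : Submonoid.closure S, invSqrtAbs b ≠ ⊤ := by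
  set x := (√a)⁻¹
  have hx : x < 1 := inv_lt_one_of_one_lt₀ (Real.lt_sqrt_of_sq_lt (by simpa using ha))
  have hx0 : 0 ≤ (1 - x)⁻¹ := inv_nonneg.2 (by linarith)
  have hbound : ∀ g ∈ S, 0 ≤ (√g)⁻¹ ∧ (√g)⁻¹ ≤ x := fun g hg =>
    ⟨by positivity, inv_anti₀ (by positivity) (Real.sqrt_le_sqrt (hS g hg))⟩
  have hfactor_nonneg : ∀ g ∈ S, 0 ≤ (1 - (√g)⁻¹)⁻¹ := fun g hg =>
    inv_nonneg.2 (by linarith [(hbound g hg).2])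
  refine ne_top_of_le_ne_top ENNReal.ofReal_ne_top <|
    Submonoid.tsum_closure_le_of_prod_le invSqrtAbs
      (c := ENNReal.ofReal (Real.exp ((1 - x)⁻¹ * ∑' g : S, 1 / √(g : ℝ)))) fun t ht => ?_
  have hfactor : ∀ g ∈ t, (1 - invSqrtAbs g)⁻¹ = ENNReal.ofReal (1 - (√g)⁻¹)⁻¹ := by
    intro g hg
    obtain ⟨h0, hle⟩ := hbound g (ht hg)
    rw [invSqrtAbs_apply, abs_of_pos (by linarith [hS g (ht hg)]), ← ENNReal.ofReal_one,
      ← ENNReal.ofReal_sub _ h0, ENNReal.ofReal_inv_of_pos (by linarith)]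
  rw [Finset.prod_congr rfl hfactor,
    ← ENNReal.ofReal_prod_of_nonneg fun g hg => hfactor_nonneg g (ht hg)]
  refine ENNReal.ofReal_le_ofReal ?_
  calc ∏ g ∈ t, (1 - (√g)⁻¹)⁻¹ ≤ ∏ g ∈ t, (1 + (1 - x)⁻¹ * (√g)⁻¹) :=
        Finset.prod_le_prod (fun g hg => hfactor_nonneg g (ht hg)) fun g hg =>
          inv_one_sub_le_one_add_mul (hbound g (ht hg)).1 (hbound g (ht hg)).2 hx
    _ ≤ Real.exp (∑ g ∈ t, (1 - x)⁻¹ * (√g)⁻¹) :=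
        Real.prod_one_add_le_exp_sum _ fun g => mul_nonneg hx0 (by positivity)
    _ ≤ Real.exp ((1 - x)⁻¹ * ∑' g : S, 1 / √(g : ℝ)) := by
        rw [Real.exp_le_exp, ← Finset.mul_sum]
        refine mul_le_mul_of_nonneg_left ?_ hx0
        classical
        rw [← Finset.sum_subtype_of_mem _ ht]
        simpa only [one_div] using hsum.sum_le_tsum _ fun g _ => by positivity

theorem pow_mul_abs_sub_le_abs_pow_succ_sub {N x y : ℝ} (m : ℕ) (hN : 0 ≤ N) (hx : N ≤ x)
    (hy : N ≤ y) : N ^ m * |x - y| ≤ |x ^ (m + 1) - y ^ (m + 1)| := by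
  wlog hxy : x ≤ y generalizing x y
  · rw [abs_sub_comm, abs_sub_comm (x ^ _)]
    exact this hy hx (le_of_not_ge hxy)
  have hx0 : 0 ≤ x := hN.trans hx
  rw [abs_of_nonpos (sub_nonpos.2 hxy), abs_of_nonpos (sub_nonpos.2 (pow_le_pow_left₀ hx0 hxy _))]
  have : y ^ (m + 1) - x ^ (m + 1) = y * (y ^ m - x ^ m) + x ^ m * (y - x) := by ring
  nlinarith [pow_le_pow_left₀ hN hx m, pow_le_pow_left₀ hx0 hxy m]

theorem volume_setOf_le_and_abs_mul_pow_sub_lt_le {N b c δ : ℝ} (m : ℕ) (hN : 0 < N)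
    (hb : 0 < b) :
    volume {α | N ≤ α ∧ |b * α ^ (m + 1) - c| < δ} ≤ ENNReal.ofReal (2 * δ / (b * N ^ m)) := by
  refine (Real.volume_le_diam _).trans (Metric.ediam_le fun x hx y hy => ?_)
  rw [edist_dist, Real.dist_eq]
  refine ENNReal.ofReal_le_ofReal ((le_div_iff₀ (by positivity)).2 ?_)
  calc |x - y| * (b * N ^ m) = b * (N ^ m * |x - y|) := by ring
    _ ≤ b * |x ^ (m + 1) - y ^ (m + 1)| := by
        gcongr; exact pow_mul_abs_sub_le_abs_pow_succ_sub m hN.le hx.1 hy.1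
    _ = |(b * x ^ (m + 1) - c) - (b * y ^ (m + 1) - c)| := by
        rw [← abs_of_pos hb, ← abs_mul, abs_of_pos hb]; ring_nf
    _ ≤ |b * x ^ (m + 1) - c| + |b * y ^ (m + 1) - c| := abs_sub _ _
    _ ≤ 2 * δ := by linarith [hx.2, hy.2]

theorem volume_setOf_mem_Ioo_and_abs_mul_pow_sub_lt_le {N b c δ : ℝ} (m : ℕ) (hN : 1 ≤ N)
    (hδN : δ ≤ N) (hb : 1 ≤ b) (hc : 0 < c) :
    volume {α | α ∈ Set.Ioo N (2 * N) ∧ |b * α ^ (m + 1) - c| < δ} ≤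
      ENNReal.ofReal (2 * √2 * δ * N * (√(2 * N) / N) ^ (m + 1)) * invSqrtAbs b *
        invSqrtAbs c := by
  set E := {α | α ∈ Set.Ioo N (2 * N) ∧ |b * α ^ (m + 1) - c| < δ}
  rcases E.eq_empty_or_nonempty with h | ⟨α, ⟨hNα, hα2N⟩, hαc⟩
  · rw [h, measure_empty]
    exact zero_le
  have hδ : 0 < δ := (abs_nonneg _).trans_lt hαc
  have hN0 : 0 < N := by linarith
  have hb0 : 0 < b := by linarith
  have hcb : c ≤ 2 * b * (2 * N) ^ (m + 1) := by
    have h1 : b * α ^ (m + 1) ≤ b * (2 * N) ^ (m + 1) := by gcongr; linarith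
    have h2 : δ ≤ b * (2 * N) ^ (m + 1) := calc
      δ ≤ 2 * N := by linarith
      _ ≤ (2 * N) ^ (m + 1) := le_self_pow₀ (by linarith) (by omega)
      _ ≤ b * (2 * N) ^ (m + 1) := le_mul_of_one_le_left (by positivity) hb
    linarith [(abs_lt.1 hαc).1]
  have hsqrt : √c ≤ √2 * √b * √(2 * N) ^ (m + 1) := by
    have hsq : (√2 * √b * √(2 * N) ^ (m + 1)) ^ 2 = 2 * b * (2 * N) ^ (m + 1) := by
      rw [mul_pow, mul_pow, ← pow_mul, mul_comm (m + 1), pow_mul, Real.sq_sqrt zero_le_two,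
        Real.sq_sqrt hb0.le, Real.sq_sqrt (by positivity)]
    rw [← Real.sqrt_sq (by positivity : 0 ≤ √2 * √b * √(2 * N) ^ (m + 1)), hsq]
    exact Real.sqrt_le_sqrt hcb
  calc volume E ≤ volume {α | N ≤ α ∧ |b * α ^ (m + 1) - c| < δ} :=
        measure_mono fun α h => ⟨h.1.1.le, h.2⟩
    _ ≤ ENNReal.ofReal (2 * δ / (b * N ^ m)) :=
        volume_setOf_le_and_abs_mul_pow_sub_lt_le m hN0 hb0
    _ ≤ _ := by
        rw [invSqrtAbs_apply, invSqrtAbs_apply, abs_of_pos hb0, abs_of_pos hc,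
          ← ENNReal.ofReal_mul (by positivity), ← ENNReal.ofReal_mul (by positivity)]
        refine ENNReal.ofReal_le_ofReal ?_
        have hc0 : 0 < √c := Real.sqrt_pos.2 hc
        calc 2 * δ / (b * N ^ m)
            ≤ 2 * δ / (b * N ^ m) * (√2 * √b * √(2 * N) ^ (m + 1) / √c) :=
              le_mul_of_one_le_right (by positivity) ((one_le_div hc0).2 hsqrt)
          _ = _ := by
              rw [div_pow]
              field_simp
              rw [Real.sq_sqrt hb0.le]
              ring

theorem ENNReal.tsum_pow_succ_le_two_mul {x : ℝ≥0∞} (hx : x ≤ 2⁻¹) :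
    ∑' m : ℕ, x ^ (m + 1) ≤ 2 * x := by
  simp_rw [pow_succ']
  rw [ENNReal.tsum_mul_left, ENNReal.tsum_geometric, mul_comm 2]
  gcongr
  rw [ENNReal.inv_le_iff_inv_le, ← ENNReal.one_sub_inv_two]
  exact tsub_le_tsub_left hx 1

def exceptionalSet (B : Submonoid ℝ) (δ N : ℝ) : Set ℝ :=
  ⋃ p : ℕ × B × B, {α | α ∈ Set.Ioo N (2 * N) ∧ |p.2.1 * α ^ (p.1 + 1) - p.2.2| < δ}

theorem volume_exceptionalSet_lt {B : Submonoid ℝ} (hB : ∀ b ∈ B, 1 ≤ b) {C δ N : ℝ}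
    (hC : 0 ≤ C) (hW : ∑' b : B, invSqrtAbs b ≤ ENNReal.ofReal C) (hδ : 0 ≤ δ) (hN : 8 ≤ N)
    (hδN : δ ≤ N) (hNC : 8 * δ * C ^ 2 < √N) :
    volume (exceptionalSet B δ N) < ENNReal.ofReal N := by
  have : Countable B := by
    refine Set.countable_univ_iff.1 <|
      (Summable.countable_support_ennreal (hW.trans_lt ENNReal.ofReal_lt_top).ne).mono
      fun b _ => ?_
    simpa [invSqrtAbs_apply] using (zero_lt_one.trans_le (hB b b.2)).ne'
  have hN0 : 0 < N := by linarith
  set q := √(2 * N) / N with hq_def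
  have hq : q ≤ 2⁻¹ := by
    rw [div_le_iff₀ hN0, Real.sqrt_le_left (by positivity)]
    nlinarith
  calc volume (exceptionalSet B δ N)
      ≤ ∑' p : ℕ × B × B, ENNReal.ofReal (2 * √2 * δ * N) * ENNReal.ofReal q ^ (p.1 + 1) *
          invSqrtAbs p.2.1 * invSqrtAbs p.2.2 := by
        refine (measure_iUnion_le _).trans (ENNReal.tsum_le_tsum fun p => ?_)
        rw [← ENNReal.ofReal_pow (by positivity), ← ENNReal.ofReal_mul (by positivity)]
        exact volume_setOf_mem_Ioo_and_abs_mul_pow_sub_lt_le _ (by linarith) hδN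
          (hB _ p.2.1.2) (by linarith [hB _ p.2.2.2])
    _ = ENNReal.ofReal (2 * √2 * δ * N) * (∑' m : ℕ, ENNReal.ofReal q ^ (m + 1)) *
          (∑' b : B, invSqrtAbs b) * ∑' c : B, invSqrtAbs c := by
        simp only [ENNReal.tsum_prod', ENNReal.tsum_mul_left, ENNReal.tsum_mul_right]
    _ ≤ ENNReal.ofReal (2 * √2 * δ * N) * (2 * ENNReal.ofReal q) * ENNReal.ofReal C *
          ENNReal.ofReal C := by
        gcongr
        exact ENNReal.tsum_pow_succ_le_two_mul (by simpa using ENNReal.ofReal_le_ofReal hq)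
    _ = ENNReal.ofReal (8 * δ * C ^ 2 * √N) := by
        rw [← ENNReal.ofReal_ofNat 2, ← ENNReal.ofReal_mul zero_le_two,
          ← ENNReal.ofReal_mul (by positivity), ← ENNReal.ofReal_mul (by positivity),
          ← ENNReal.ofReal_mul (by positivity)]
        congr 1
        rw [hq_def, Real.sqrt_mul zero_le_two]
        field_simp
        rw [Real.sq_sqrt zero_le_two]
        ring
    _ < ENNReal.ofReal N := by
        rw [ENNReal.ofReal_lt_ofReal_iff hN0]
        nlinarith [Real.mul_self_sqrt hN0.le, Real.sqrt_pos.2 hN0]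

theorem pairwise_closure_insert {S : Set ℝ} {α δ : ℝ} (hα : 1 ≤ α)
    (hS : (Submonoid.closure S : Set ℝ).Pairwise fun x y => δ ≤ |x - y|)
    (hfar : ∀ b ∈ Submonoid.closure S, ∀ c ∈ Submonoid.closure S, ∀ m : ℕ,
      δ ≤ |b * α ^ (m + 1) - c|) :
    (Submonoid.closure (insert α S) : Set ℝ).Pairwise fun x y => δ ≤ |x - y| := by
  have key : ∀ b ∈ Submonoid.closure S, ∀ c ∈ Submonoid.closure S, ∀ k l : ℕ, l ≤ k →
      α ^ k * b ≠ α ^ l * c → δ ≤ |α ^ k * b - α ^ l * c| := by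
    intro b hb c hc k l hlk hne
    obtain ⟨m, rfl⟩ := Nat.exists_eq_add_of_le hlk
    have hfactor : α ^ (l + m) * b - α ^ l * c = α ^ l * (b * α ^ m - c) := by ring
    rw [hfactor, abs_mul, abs_of_pos (by positivity)]
    refine (le_mul_of_one_le_left (abs_nonneg _) (one_le_pow₀ hα)).trans' ?_
    cases m with
    | zero => simpa using hS hb hc fun h => hne (by rw [h, add_zero])
    | succ m => exact hfar b hb c hc m
  intro x hx y hy hxy
  obtain ⟨k, b, hb, rfl⟩ := Submonoid.exists_pow_mul_of_mem_closure_insert hx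
  obtain ⟨l, c, hc, rfl⟩ := Submonoid.exists_pow_mul_of_mem_closure_insert hy
  rcases le_total l k with h | h
  · exact key b hb c hc k l h hxy
  · rw [abs_sub_comm]
    exact key c hc b hb l k h hxy.symm

/-- **Theorem 3 (Ruzsa).** Let `G'` be a set of reals `> 1` with `∑_{g ∈ G'} 1/√g < ∞`
whose generated multiplicative monoid `B'` is `δ`-separated.  Then the set of non-integer
reals `α > 1` for which the monoid generated by `G' ∪ {α}` is still `δ`-separated has
positive Lebesgue measure. -/
theorem stmt_2 (G' : Set ℝ) (hG' : ∀ g ∈ G', 1 < g)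
    (hsum : Summable (fun g : G' => 1 / Real.sqrt (g : ℝ)))
    (δ : ℝ) (hδ : 0 < δ)
    (hsep : ∀ x ∈ Submonoid.closure G', ∀ y ∈ Submonoid.closure G', x ≠ y → δ ≤ |x - y|) :
    0 < volume {α : ℝ | 1 < α ∧ α ∉ Set.range ((↑) : ℤ → ℝ) ∧
      ∀ x ∈ Submonoid.closure (G' ∪ {α}), ∀ y ∈ Submonoid.closure (G' ∪ {α}),
        x ≠ y → δ ≤ |x - y|} := by
  have hgap : ∀ g ∈ G', 1 + δ ≤ g := fun g hg => by
    have := hsep g (Submonoid.subset_closure hg) 1 (one_mem _) (hG' g hg).ne'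
    rw [abs_of_pos (sub_pos.2 (hG' g hg))] at this
    linarith
  have hW := tsum_invSqrtAbs_closure_ne_top (by linarith : 1 < 1 + δ) hgap hsum
  set C := (∑' b : Submonoid.closure G', invSqrtAbs b).toReal
  set N := (8 * δ * C ^ 2 + δ + 8) ^ 2
  have hN : 8 ≤ N ∧ δ ≤ N := by
    have : 0 ≤ 8 * δ * C ^ 2 := by positivity
    constructor <;> nlinarith
  have hE : volume (exceptionalSet (Submonoid.closure G') δ N) < ENNReal.ofReal N :=
    volume_exceptionalSet_lt
      (fun b => Submonoid.one_le_of_mem_closure fun g hg => by linarith [hgap g hg])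
      ENNReal.toReal_nonneg (ENNReal.ofReal_toReal hW).ge hδ.le hN.1 hN.2
      (by rw [Real.sqrt_sq (by positivity)]; linarith)
  have hbad : volume (exceptionalSet (Submonoid.closure G') δ N ∪ Set.range ((↑) : ℤ → ℝ)) <
      volume (Set.Ioo N (2 * N)) := by
    rw [Real.volume_Ioo, show 2 * N - N = N by ring]
    refine (measure_union_le _ _).trans_lt ?_
    rwa [(Set.countable_range _).measure_zero, add_zero]
  refine (tsub_pos_of_lt hbad).trans_le (le_measure_sdiff.trans (measure_mono ?_))
  rintro α ⟨hαN, hαbad⟩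
  simp only [exceptionalSet, Set.mem_union, Set.mem_iUnion, not_or, not_exists] at hαbad
  have hα : 1 < α := by linarith [hαN.1]
  refine ⟨hα, hαbad.2, ?_⟩
  rw [Set.union_singleton]
  exact pairwise_closure_insert hα.le hsep fun b hb c hc m =>
    not_lt.1 fun h => hαbad.1 (m, ⟨b, hb⟩, ⟨c, hc⟩) ⟨hαN, h⟩
end

section
/- Let q ≥ 2 be a squarefree integer and let a, b be positive integers, and set α = (a·√q + b)². Then α is irrational, α > 1, and the multiplicative submonoid B of ℝ generated by {(p² : ℝ) : p prime} ∪ {α} satisfies |x − y| ≥ 1 for all distinct x, y ∈ B. (In particular, there are infinitely many non-integer reals α > 1 for which adjoining α to the squares of the primes yields a 1-separated set of Beurling integers.) -/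
/-!
The generators are the squares of the elements `p` and `ω = b + a√q` of `ℤ[√q]`, so every
element of the monoid is `γ²` for some `γ ∈ ℤ[√q]` that dominates its conjugate, `|γ'| ≤ γ`; this property
is preserved by products. For two such `γ ≠ δ`,
`|γ² - δ²| = |γ - δ| (γ + δ) ≥ |γ - δ| |γ' - δ'| = |N(γ - δ)| ≥ 1`,
because `q` is not a square, so the norm of `γ - δ` is a nonzero integer.
-/

theorem Squarefree.isUnit_of_isSquare {R : Type*} [Monoid R] {x : R} (hx : Squarefree x)
    (hsq : IsSquare x) : IsUnit x := by
  obtain ⟨r, rfl⟩ := hsq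
  have hr : IsUnit r := hx r dvd_rfl
  exact hr.mul hr

namespace Zsqrtd

variable {d : ℤ} (h : 0 ≤ d)

theorem intCast_norm_eq_toReal_mul_toReal_star (z : ℤ√d) :
    (z.norm : ℝ) = toReal h z * toReal h (star z) := by
  rw [← map_intCast (toReal h), norm_eq_mul_conj, map_mul]

theorem one_le_abs_toReal_mul_abs_toReal_star (hd : ¬IsSquare d) {z : ℤ√d} (hz : z ≠ 0) :
    1 ≤ |toReal h z| * |toReal h (star z)| := by
  have hnorm : z.norm ≠ 0 := (norm_eq_zero (fun n hn => hd ⟨n, hn⟩) z).not.mpr hz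
  rw [← abs_mul, ← intCast_norm_eq_toReal_mul_toReal_star]
  exact_mod_cast Int.one_le_abs hnorm

theorem irrational_toReal (hd : ¬IsSquare d) {z : ℤ√d} (hz : z.im ≠ 0) :
    Irrational (toReal h z) := by
  have hsqrt : Irrational √d := (irrational_sqrt_intCast_iff_of_nonneg h).mpr hd
  simpa using (hsqrt.intCast_mul hz).intCast_add z.re

def dominant : Submonoid (ℤ√d) where
  carrier := {γ | |toReal h (star γ)| ≤ toReal h γ}
  mul_mem' {γ δ} hγ hδ := by
    simp only [Set.mem_ofPred_eq, star_mul', map_mul, abs_mul] at hγ hδ ⊢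
    exact mul_le_mul hγ hδ (abs_nonneg _) ((abs_nonneg _).trans hγ)
  one_mem' := by simp

theorem mem_dominant_of_nonneg {z : ℤ√d} (hre : 0 ≤ z.re) (him : 0 ≤ z.im) :
    z ∈ dominant h := by
  have : 0 ≤ (z.im : ℝ) * √d := by positivity
  show |toReal h (star z)| ≤ toReal h z
  simp only [toReal_apply, re_star, im_star, Int.cast_neg, neg_mul, ← sub_eq_add_neg]
  rw [abs_le]
  constructor <;> linarith [(Int.cast_nonneg hre : (0 : ℝ) ≤ z.re)]

theorem one_le_abs_sq_sub_sq (hd : ¬IsSquare d) {γ δ : ℤ√d} (hγ : γ ∈ dominant h)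
    (hδ : δ ∈ dominant h) (hne : γ ≠ δ) :
    1 ≤ |toReal h γ ^ 2 - toReal h δ ^ 2| := by
  have hconj : |toReal h (star (γ - δ))| ≤ toReal h γ + toReal h δ := by
    rw [star_sub, map_sub]
    exact (abs_sub _ _).trans (add_le_add hγ hδ)
  calc 1 ≤ |toReal h (γ - δ)| * |toReal h (star (γ - δ))| :=
        one_le_abs_toReal_mul_abs_toReal_star h hd (sub_ne_zero.mpr hne)
    _ ≤ |toReal h (γ - δ)| * (toReal h γ + toReal h δ) := by gcongr
    _ = |toReal h γ ^ 2 - toReal h δ ^ 2| := by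
        rw [map_sub, sq_sub_sq, abs_mul, mul_comm, abs_of_nonneg ((abs_nonneg _).trans hconj)]

end Zsqrtd

open Zsqrtd in
/-- **Theorem 4 (Ruzsa), first part.** For a squarefree integer `q ≥ 2` and positive
integers `a, b`, the number `α = (a√q + b)²` is irrational, exceeds `1`, and the
multiplicative monoid generated by the prime squares together with `α` is `1`-separated. -/
theorem stmt_3 (q : ℕ) (hq2 : 2 ≤ q) (hq : Squarefree q) (a b : ℕ) (ha : 0 < a) (hb : 0 < b)
    (α : ℝ) (hα : α = ((a : ℝ) * Real.sqrt q + (b : ℝ)) ^ 2) :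
    Irrational α ∧ 1 < α ∧
      ∀ x ∈ Submonoid.closure ({x : ℝ | ∃ p : ℕ, p.Prime ∧ x = (p : ℝ) ^ 2} ∪ {α}),
        ∀ y ∈ Submonoid.closure ({x : ℝ | ∃ p : ℕ, p.Prime ∧ x = (p : ℝ) ^ 2} ∪ {α}),
          x ≠ y → 1 ≤ |x - y| := by
  have h0 : (0 : ℤ) ≤ q := Int.natCast_nonneg q
  have hns : ¬IsSquare (q : ℤ) := fun hsq =>
    absurd (Nat.isUnit_iff.mp (hq.isUnit_of_isSquare (Int.isSquare_natCast_iff.mp hsq))) (by omega)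
  set ι := toReal h0
  let ω : ℤ√(q : ℤ) := ⟨b, a⟩
  have hω : ι ω = a * √q + b := by simp [ι, ω, add_comm]
  have hαω : α = ι (ω ^ 2) := by rw [map_pow, hω, hα]
  have hB : Submonoid.closure ({x : ℝ | ∃ p : ℕ, p.Prime ∧ x = (p : ℝ) ^ 2} ∪ {α}) ≤
      (dominant h0).map ((powMonoidHom 2).comp (ι : ℤ√(q : ℤ) →* ℝ)) := by
    refine Submonoid.closure_le.mpr ?_
    rintro _ (⟨p, -, rfl⟩ | rfl)
    · exact ⟨p, mem_dominant_of_nonneg h0 (by simp) (by simp), by simp⟩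
    · exact ⟨ω, mem_dominant_of_nonneg h0 (by simp [ω]) (by simp [ω]), by simp [hαω]⟩
  refine ⟨?_, ?_, ?_⟩
  · exact hαω ▸ irrational_toReal h0 hns (by simp [ω, sq]; positivity)
  · have hω1 : 1 < ι ω := by
      have hb1 : (1 : ℝ) ≤ b := by exact_mod_cast hb
      have haq : 0 < (a : ℝ) * √q := by positivity
      linarith
    rw [hαω, map_pow]
    exact one_lt_pow₀ hω1 two_ne_zero
  · rintro _ hx _ hy hxy
    obtain ⟨γ, hγ, rfl⟩ := hB hx
    obtain ⟨δ, hδ, rfl⟩ := hB hy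
    exact one_le_abs_sq_sub_sq h0 hns hγ hδ fun h => hxy (h ▸ rfl)
end

section
/- The set of real numbers α > 1 such that the multiplicative submonoid B of ℝ generated by {(p² : ℝ) : p prime} ∪ {α} satisfies |x − y| ≥ 1 for all distinct x, y ∈ B, has Lebesgue measure zero. -/
/-!
Every square `k²` lies in the monoid `B_β` generated by the prime squares and `β`. So if `B_β` is
`1`-separated and `|β - (n/m)²| < 1/m²`, then `β m²` and `n²` are elements of `B_β` less than `1`
apart, which forces `β = (n/m)²`. Hence the separated `α` that are not rational squares avoid the
balls of radius `1/m²` around all rational squares `(n/m)²`. For such an `α`, `√α` is irrational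
and has approximations `|√α - n/m| < 1/m²` with `m` arbitrarily large; each puts one of these balls
inside `closedBall α (K/m²)` with `K = 2√α + 2`, so the set has lower density at most `1 - 1/K` at
`α`. By the Lebesgue density theorem the set is null, and the rational squares are countable.
-/

open MeasureTheory Filter Metric Set Topology

theorem Submonoid.apply_mem_of_forall_prime_mem {M : Type*} [Monoid M] (S : Submonoid M)
    (f : ℕ →* M) (hf : ∀ p, p.Prime → f p ∈ S) {k : ℕ} (hk : k ≠ 0) : f k ∈ S := by
  induction k using Nat.recOnMul with
  | zero => exact absurd rfl hk
  | one => simp [S.one_mem]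
  | prime p hp => exact hf p hp
  | mul a b ha hb =>
    rw [map_mul]
    exact S.mul_mem (ha (left_ne_zero_of_mul hk)) (hb (right_ne_zero_of_mul hk))

theorem Rat.finite_setOf_den_le_abs_le (D : ℕ) (C : ℝ) :
    {q : ℚ | q.den ≤ D ∧ |(q : ℝ)| ≤ C}.Finite := by
  set N : ℤ := ⌈C * D⌉
  refine ((finite_Icc (-N) N).prod (finite_Iic D)).image (fun p : ℤ × ℕ => (p.1 / p.2 : ℚ))
    |>.subset fun q ⟨hden, hq⟩ => ⟨(q.num, q.den), ⟨?_, hden⟩, Rat.num_div_den q⟩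
  have hnum : |(q.num : ℝ)| ≤ C * D := by
    have hnum_eq : (q.num : ℝ) = q * q.den := by exact_mod_cast (Rat.mul_den_eq_num q).symm
    rw [hnum_eq, abs_mul, Nat.abs_cast]
    exact mul_le_mul hq (by exact_mod_cast hden) (Nat.cast_nonneg _) ((abs_nonneg _).trans hq)
  have hN : |q.num| ≤ N := by
    exact_mod_cast (Int.cast_abs (R := ℝ) ▸ hnum).trans (Int.le_ceil _)
  exact abs_le.1 hN

theorem Real.exists_rat_abs_sub_lt_one_div_den_sq_lt_den {ξ : ℝ} (hξ : Irrational ξ) (D : ℕ) :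
    ∃ q : ℚ, |ξ - q| < 1 / (q.den : ℝ) ^ 2 ∧ D < q.den := by
  by_contra! h
  refine Real.infinite_rat_abs_sub_lt_one_div_den_sq_of_irrational hξ
    ((Rat.finite_setOf_den_le_abs_le D (|ξ| + 1)).subset fun q hq => ⟨h q hq, ?_⟩)
  have hq1 : |ξ - q| < 1 := hq.trans_le <| by
    rw [div_le_one (by positivity), one_le_sq_iff_one_le_abs, Nat.abs_cast, Nat.one_le_cast]
    exact q.pos
  linarith [abs_sub_abs_le_abs_sub (q : ℝ) ξ, abs_sub_comm (q : ℝ) ξ]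

theorem eq_sq_of_mem_ball_sq {M : Submonoid ℝ} (hsep : ∀ x ∈ M, ∀ y ∈ M, x ≠ y → 1 ≤ |x - y|)
    (hsq : ∀ k : ℕ, k ≠ 0 → (k : ℝ) ^ 2 ∈ M) {β : ℝ} (hβ : β ∈ M) {q : ℚ} (hq : q ≠ 0)
    (h : β ∈ ball ((q : ℝ) ^ 2) (1 / (q.den : ℝ) ^ 2)) : β = (q : ℝ) ^ 2 := by
  have hden_pos : (0 : ℝ) < (q.den : ℝ) ^ 2 := by positivity
  have hnum : ((q.num.natAbs : ℕ) : ℝ) ^ 2 = (q : ℝ) ^ 2 * (q.den : ℝ) ^ 2 := by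
    rw [Nat.cast_natAbs, Int.cast_abs, sq_abs, Rat.cast_def]
    field_simp
  have hclose : |β * (q.den : ℝ) ^ 2 - ((q.num.natAbs : ℕ) : ℝ) ^ 2| < 1 := by
    rw [hnum, ← sub_mul, abs_mul, abs_of_pos hden_pos, ← lt_div_iff₀ hden_pos]
    rwa [mem_ball, Real.dist_eq] at h
  by_contra hne
  refine (hsep _ (M.mul_mem hβ (hsq _ q.pos.ne')) _ (hsq _ ?_) ?_).not_gt hclose
  · exact Int.natAbs_ne_zero.2 (Rat.num_ne_zero.2 hq)
  · rw [hnum]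
    exact fun heq => hne (mul_right_cancel₀ hden_pos.ne' heq)

theorem ball_sq_subset_closedBall_sq {u q δ : ℝ} (hu : 0 ≤ u) (hδ : δ ≤ 1) (hq : |u - q| < δ) :
    ball (q ^ 2) δ ⊆ closedBall (u ^ 2) ((2 * u + 2) * δ) := by
  intro t ht
  rw [mem_ball, Real.dist_eq] at ht
  have hsum : |q + u| ≤ 2 * u + 1 := by
    rw [abs_le]; constructor <;> linarith [abs_lt.1 hq]
  have hsq : |q ^ 2 - u ^ 2| ≤ (2 * u + 1) * δ := by
    rw [sq_sub_sq, abs_mul, abs_sub_comm q u]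
    exact mul_le_mul hsum hq.le (abs_nonneg _) (by linarith)
  rw [mem_closedBall, Real.dist_eq]
  calc |t - u ^ 2| ≤ |t - q ^ 2| + |q ^ 2 - u ^ 2| := abs_sub_le _ _ _
    _ ≤ (2 * u + 2) * δ := by linarith

theorem Real.volume_inter_closedBall_le_of_disjoint_ball {s : Set ℝ} {x a δ K : ℝ} (hδ : 0 < δ)
    (hK : 1 ≤ K) (hsub : ball a δ ⊆ closedBall x (K * δ)) (hdisj : Disjoint s (ball a δ)) :
    volume (s ∩ closedBall x (K * δ)) ≤
      ENNReal.ofReal (1 - K⁻¹) * volume (closedBall x (K * δ)) := by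
  calc volume (s ∩ closedBall x (K * δ))
      ≤ volume (closedBall x (K * δ) \ ball a δ) :=
        measure_mono fun y hy => ⟨hy.2, hdisj.notMem_of_mem_left hy.1⟩
    _ = ENNReal.ofReal (2 * (K * δ)) - ENNReal.ofReal (2 * δ) := by
        rw [measure_sdiff hsub measurableSet_ball.nullMeasurableSet measure_ball_lt_top.ne,
          Real.volume_closedBall, Real.volume_ball]
    _ = ENNReal.ofReal ((1 - K⁻¹) * (2 * (K * δ))) := by
        rw [← ENNReal.ofReal_sub _ (by positivity)]
        congr 1
        field_simp
    _ = ENNReal.ofReal (1 - K⁻¹) * volume (closedBall x (K * δ)) := by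
        rw [ENNReal.ofReal_mul (sub_nonneg.2 (inv_le_one_of_one_le₀ hK)), Real.volume_closedBall]

theorem Besicovitch.measure_eq_zero_of_forall_frequently_le {X : Type*} [MetricSpace X]
    [MeasurableSpace X] [BorelSpace X] [SecondCountableTopology X] [HasBesicovitchCovering X]
    (μ : Measure X) [IsLocallyFiniteMeasure μ] {s : Set X}
    (h : ∀ x ∈ s, ∃ c < 1, ∃ᶠ r in 𝓝[>] 0, μ (s ∩ closedBall x r) ≤ c * μ (closedBall x r)) :
    μ s = 0 := by
  rw [← Measure.restrict_apply_self]
  refine measure_mono_null (fun x hx => ?_)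
    (ae_iff.1 (Besicovitch.ae_tendsto_measure_inter_div μ s))
  intro hdensity
  obtain ⟨c, hc, hfreq⟩ := h x hx
  obtain ⟨r, hle, hlt⟩ := (hfreq.and_eventually (hdensity.eventually (lt_mem_nhds hc))).exists
  exact (ENNReal.div_le_of_le_mul hle).not_gt hlt

theorem frequently_volume_inter_closedBall_le_of_irrational_sqrt {s : Set ℝ} {α : ℝ}
    (hα : 1 ≤ α) (hirr : Irrational √α)
    (hs : ∀ q : ℚ, q ≠ 0 → Disjoint s (ball ((q : ℝ) ^ 2) (1 / (q.den : ℝ) ^ 2))) :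
    ∃ᶠ r in 𝓝[>] 0, volume (s ∩ closedBall α r) ≤
      ENNReal.ofReal (1 - (2 * √α + 2)⁻¹) * volume (closedBall α r) := by
  rw [(nhdsGT_basis 0).frequently_iff]
  intro ε hε
  obtain ⟨D, hD⟩ := exists_nat_gt ((2 * √α + 2) / ε)
  obtain ⟨q, hq, hDq⟩ := Real.exists_rat_abs_sub_lt_one_div_den_sq_lt_den hirr D
  have hden : (1 : ℝ) ≤ q.den := Nat.one_le_cast.2 q.pos
  have hδ : 0 < 1 / (q.den : ℝ) ^ 2 := by positivity
  have hδ1 : 1 / (q.den : ℝ) ^ 2 ≤ 1 := div_le_one_of_le₀ (one_le_pow₀ hden) (by positivity)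
  have hq0 : q ≠ 0 := by
    rintro rfl
    simp only [Rat.cast_zero, sub_zero, Rat.den_zero, Nat.cast_one, one_pow, div_one,
      abs_of_nonneg (Real.sqrt_nonneg α)] at hq
    linarith [Real.one_le_sqrt.2 hα]
  have hsub := ball_sq_subset_closedBall_sq (Real.sqrt_nonneg α) hδ1 hq
  rw [Real.sq_sqrt (by linarith)] at hsub
  have hKε : 2 * √α + 2 < q.den * ε := by
    rw [div_lt_iff₀ hε] at hD
    exact hD.trans (mul_lt_mul_of_pos_right (by exact_mod_cast hDq) hε)
  refine ⟨(2 * √α + 2) * (1 / (q.den : ℝ) ^ 2), ⟨by positivity, ?_⟩,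
    Real.volume_inter_closedBall_le_of_disjoint_ball hδ (by linarith [Real.sqrt_nonneg α]) hsub
      (hs q hq0)⟩
  rw [mul_one_div, div_lt_iff₀ (by positivity)]
  linarith [mul_le_mul_of_nonneg_right (le_self_pow₀ hden two_ne_zero) hε.le]

/-- **Theorem 4 (Ruzsa), second part.** The set of reals `α > 1` for which the
multiplicative monoid generated by the prime squares together with `α` is `1`-separated
has Lebesgue measure zero. -/
theorem stmt_4 :
    volume {α : ℝ | 1 < α ∧
      ∀ x ∈ Submonoid.closure ({x : ℝ | ∃ p : ℕ, p.Prime ∧ x = (p : ℝ) ^ 2} ∪ {α}),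
        ∀ y ∈ Submonoid.closure ({x : ℝ | ∃ p : ℕ, p.Prime ∧ x = (p : ℝ) ^ 2} ∪ {α}),
          x ≠ y → 1 ≤ |x - y|} = 0 := by
  set P : Set ℝ := {x : ℝ | ∃ p : ℕ, p.Prime ∧ x = (p : ℝ) ^ 2}
  have hsq (α : ℝ) (k : ℕ) (hk : k ≠ 0) : (k : ℝ) ^ 2 ∈ Submonoid.closure (P ∪ {α}) :=
    Submonoid.apply_mem_of_forall_prime_mem _ ((powMonoidHom 2).comp (Nat.castRingHom ℝ : ℕ →* ℝ))
      (fun p hp => Submonoid.subset_closure (Or.inl ⟨p, hp, rfl⟩)) hk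
  set S : Set ℝ := range fun q : ℚ => (q : ℝ) ^ 2
  refine measure_mono_null (subset_sdiff_union _ S)
    (measure_union_null ?_ ((countable_range _).measure_zero _))
  refine Besicovitch.measure_eq_zero_of_forall_frequently_le volume fun α ⟨⟨hα, _⟩, hαS⟩ => ?_
  have hα0 : 0 ≤ α := by linarith
  have hirr : Irrational √α := by
    rintro ⟨q, hq⟩
    exact hαS ⟨q, show (q : ℝ) ^ 2 = α by rw [hq, Real.sq_sqrt hα0]⟩
  refine ⟨ENNReal.ofReal (1 - (2 * √α + 2)⁻¹),
    ENNReal.ofReal_lt_one.2 (sub_lt_self _ (by positivity)), ?_⟩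
  refine frequently_volume_inter_closedBall_le_of_irrational_sqrt hα.le hirr
    fun q hq => disjoint_left.2 fun β hβ hβq => ?_
  exact hβ.2 ⟨q, (eq_sq_of_mem_ball_sq hβ.1.2 (hsq β) (Submonoid.subset_closure (Or.inr rfl))
    hq hβq).symm⟩
end

section
/- There exist a constant c > 0 and a set G of irrational real numbers, each greater than 1, such that the counting function G(x) = #{g ∈ G : g ≤ x} satisfies G(x) > c·x/log x for all sufficiently large x, and the multiplicative submonoid B of ℝ generated by G satisfies |x − y| ≥ 1 for all distinct x, y ∈ B. -/
/-!
Take for `G` the numbers `z = a + b√2 > 1` of `ℤ[√2]` whose conjugate `z' = a - b√2`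
satisfies `|z'| ≤ 1/2`. This condition is multiplicative, so the monoid generated by `G` is
`G ∪ {1}`. For distinct `x, y` in it, `x - y` is a nonzero element of `ℤ[√2]` with
`|(x - y)'| ≤ 1`; as the norm `(x - y)(x - y)'` is a nonzero integer, `|x - y| ≥ 1`.
Taking `a = round (b√2)` for `b = 1, 2, …` puts at least `⌊x/4⌋` elements of `G` below `x`,
far more than `x / log x`.
-/

open Real Set

theorem Submonoid.eq_one_or_mem_of_mem_closure {M : Type*} [MulOneClass M] {s : Set M}
    (hs : ∀ x ∈ s, ∀ y ∈ s, x * y ∈ s) {x : M} (hx : x ∈ Submonoid.closure s) :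
    x = 1 ∨ x ∈ s := by
  induction hx using Submonoid.closure_induction with
  | mem x h => exact .inr h
  | one => exact .inl rfl
  | mul x y _ _ hx hy =>
    rcases hx with rfl | hx
    · rwa [one_mul]
    rcases hy with rfl | hy
    · exact .inr ((mul_one x).symm ▸ hx)
    exact .inr (hs x hx y hy)

namespace Zsqrtd

variable {R : Type*} [CommRing R] {d : ℤ}

def negRoot (r : {r : R // r * r = d}) : {r : R // r * r = d} := ⟨-r, by rw [neg_mul_neg, r.2]⟩

theorem lift_mul_lift_negRoot (r : {r : R // r * r = d}) (z : ℤ√d) :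
    lift r z * lift (negRoot r) z = z.norm := by
  simp only [lift_apply_apply, negRoot, norm_def]
  push_cast
  linear_combination (-(z.im : R) ^ 2) * r.2

theorem one_le_abs_lift_mul_abs_lift_negRoot [LinearOrder R] [IsStrictOrderedRing R]
    (hd : ∀ n : ℤ, d ≠ n * n) (r : {r : R // r * r = d}) {z : ℤ√d} (hz : z ≠ 0) :
    1 ≤ |lift r z| * |lift (negRoot r) z| := by
  rw [← abs_mul, lift_mul_lift_negRoot, ← Int.cast_abs]
  exact_mod_cast Int.one_le_abs ((norm_eq_zero hd z).not.mpr hz)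

end Zsqrtd

namespace ZsqrtTwo

open Zsqrtd

theorem two_ne_mul_self : ∀ n : ℤ, (2 : ℤ) ≠ n * n := fun n h => by
  rcases le_or_gt n 1 with h1 | h1 <;> rcases le_or_gt (-1) n with h2 | h2 <;> nlinarith

noncomputable def sqrtTwo : {r : ℝ // r * r = (2 : ℤ)} := ⟨√2, by simp⟩

noncomputable abbrev embed : ℤ√2 →+* ℝ := lift sqrtTwo

noncomputable abbrev conjEmbed : ℤ√2 →+* ℝ := lift (negRoot sqrtTwo)

theorem embed_apply (z : ℤ√2) : embed z = z.re + z.im * √2 := rfl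

theorem conjEmbed_apply (z : ℤ√2) : conjEmbed z = z.re - z.im * √2 := by
  simp [negRoot, sqrtTwo, sub_eq_add_neg]

theorem one_le_abs_embed_mul {z : ℤ√2} (hz : z ≠ 0) {t : ℝ} (ht : |conjEmbed z| ≤ t) :
    1 ≤ |embed z| * t :=
  (one_le_abs_lift_mul_abs_lift_negRoot two_ne_mul_self sqrtTwo hz).trans
    (mul_le_mul_of_nonneg_left ht (abs_nonneg _))

theorem irrational_embed {z : ℤ√2} (hz : z.im ≠ 0) : Irrational (embed z) := by
  rw [embed_apply, add_comm]
  exact (irrational_sqrt_two.intCast_mul hz).add_intCast _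

theorem finite_setOf_abs_embed_le (X : ℝ) :
    {z : ℤ√2 | |embed z| ≤ X ∧ |conjEmbed z| ≤ X}.Finite := by
  have hfin := ((finite_Icc (-⌊X⌋) ⌊X⌋).prod (finite_Icc (-⌊X⌋) ⌊X⌋)).preimage
    (f := fun z : ℤ√2 => (z.re, z.im)) fun z _ w _ h => by
      simp only [Prod.mk.injEq] at h; exact Zsqrtd.ext h.1 h.2
  refine hfin.subset fun z ⟨hφ, hψ⟩ => ?_
  rw [embed_apply] at hφ
  rw [conjEmbed_apply] at hψ
  have hs : (1 : ℝ) ≤ √2 := by rw [Real.one_le_sqrt]; norm_num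
  have hre : |(z.re : ℝ)| ≤ X := by
    rw [abs_le] at *; constructor <;> linarith
  have him : |(z.im : ℝ)| ≤ X := by
    have : |(z.im : ℝ)| * √2 ≤ X := by
      rw [← abs_of_pos (by positivity : (0:ℝ) < √2), ← abs_mul]
      rw [abs_le] at *; constructor <;> linarith
    nlinarith [abs_nonneg (z.im : ℝ)]
  simp only [mem_preimage, mem_prod, mem_Icc, ← abs_le]
  exact ⟨Int.le_floor.mpr (by simpa using hre), Int.le_floor.mpr (by simpa using him)⟩

def smallConjugateSet : Set ℝ :=
  {x | ∃ z : ℤ√2, embed z = x ∧ 1 < x ∧ |conjEmbed z| ≤ 1 / 2}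

theorem irrational_of_mem_smallConjugateSet {x : ℝ} (hx : x ∈ smallConjugateSet) :
    Irrational x := by
  obtain ⟨z, rfl, h1, hψ⟩ := hx
  refine irrational_embed fun him => ?_
  rw [embed_apply, him] at h1
  rw [conjEmbed_apply, him, abs_le] at hψ
  norm_num at h1 hψ
  linarith [hψ.2]

theorem mul_mem_smallConjugateSet {x y : ℝ} (hx : x ∈ smallConjugateSet)
    (hy : y ∈ smallConjugateSet) : x * y ∈ smallConjugateSet := by
  obtain ⟨z, rfl, hz1, hzψ⟩ := hx
  obtain ⟨w, rfl, hw1, hwψ⟩ := hy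
  refine ⟨z * w, map_mul _ _ _, one_lt_mul hz1.le hw1, ?_⟩
  rw [map_mul, abs_mul]
  nlinarith [abs_nonneg (conjEmbed z), abs_nonneg (conjEmbed w)]

theorem two_le_of_mem_smallConjugateSet {x : ℝ} (hx : x ∈ smallConjugateSet) : 2 ≤ x := by
  obtain ⟨z, rfl, h1, hψ⟩ := hx
  have hz : z ≠ 0 := by rintro rfl; norm_num at h1
  have := one_le_abs_embed_mul hz hψ
  rw [abs_of_pos (one_pos.trans h1)] at this
  linarith

theorem one_le_abs_sub_of_mem_smallConjugateSet {x y : ℝ} (hx : x ∈ smallConjugateSet)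
    (hy : y ∈ smallConjugateSet) (hxy : x ≠ y) : 1 ≤ |x - y| := by
  obtain ⟨z, rfl, -, hzψ⟩ := hx
  obtain ⟨w, rfl, -, hwψ⟩ := hy
  have hψ : |conjEmbed (z - w)| ≤ 1 := by
    rw [map_sub]
    linarith [abs_sub (conjEmbed z) (conjEmbed w)]
  simpa [map_sub] using one_le_abs_embed_mul (sub_ne_zero.mpr (ne_of_apply_ne _ hxy)) hψ

theorem finite_smallConjugateSet_inter_Iic (X : ℝ) : (smallConjugateSet ∩ Iic X).Finite := by
  refine ((finite_setOf_abs_embed_le (max X 1)).image embed).subset ?_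
  rintro _ ⟨⟨z, rfl, h1, hψ⟩, hX⟩
  refine ⟨z, ⟨?_, ?_⟩, rfl⟩
  · rw [abs_of_pos (one_pos.trans h1)]; exact le_max_of_le_left hX
  · exact le_max_of_le_right (hψ.trans (by norm_num))

theorem floor_div_four_le_ncard {X : ℝ} (hX : 0 ≤ X) :
    ⌊X / 4⌋₊ ≤ (smallConjugateSet ∩ Iic X).ncard := by
  have hs₁ : (1.4 : ℝ) ≤ √2 := by rw [Real.le_sqrt] <;> norm_num
  have hs₂ : √2 ≤ 1.5 := by rw [Real.sqrt_le_left] <;> norm_num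
  let f : ℕ → ℝ := fun b => embed ⟨round (b * √2), b⟩
  have hf : ∀ b ≥ 1, f b ∈ smallConjugateSet ∧ f b ≤ 4 * b := by
    intro b hb
    have hr := abs_le.mp (abs_sub_round ((b : ℝ) * √2))
    have hb' : (1 : ℝ) ≤ b := by exact_mod_cast hb
    refine ⟨⟨_, rfl, ?_, ?_⟩, ?_⟩
    · simp only [f, embed_apply]; push_cast; nlinarith
    · rw [conjEmbed_apply, abs_sub_comm]; push_cast; exact abs_sub_round _
    · simp only [f, embed_apply]; push_cast; nlinarith
  set n := ⌊X / 4⌋₊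
  have hn : 4 * (n : ℝ) ≤ X := by
    linarith [Nat.floor_le (div_nonneg hX (by norm_num : (0 : ℝ) ≤ 4))]
  have hmaps : ∀ b ∈ Icc 1 n, f b ∈ smallConjugateSet ∩ Iic X := fun b hb => by
    have : (b : ℝ) ≤ n := by exact_mod_cast hb.2
    exact ⟨(hf b hb.1).1, mem_Iic.mpr (by linarith [(hf b hb.1).2])⟩
  have hinj : InjOn f (Icc 1 n) := fun b _ c _ h => by
    simpa using congrArg Zsqrtd.im (lift_injective sqrtTwo two_ne_mul_self h)
  simpa using ncard_le_ncard_of_injOn f hmaps hinj (finite_smallConjugateSet_inter_Iic X)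

theorem one_le_abs_sub_of_mem_closure {x y : ℝ} (hx : x ∈ Submonoid.closure smallConjugateSet)
    (hy : y ∈ Submonoid.closure smallConjugateSet) (hxy : x ≠ y) : 1 ≤ |x - y| := by
  have hM {z : ℝ} (hz : z ∈ Submonoid.closure smallConjugateSet) :=
    Submonoid.eq_one_or_mem_of_mem_closure (fun _ h _ => mul_mem_smallConjugateSet h) hz
  rcases hM hx with rfl | hx <;> rcases hM hy with rfl | hy
  · exact absurd rfl hxy
  · rw [abs_sub_comm, abs_of_nonneg] <;> linarith [two_le_of_mem_smallConjugateSet hy]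
  · rw [abs_of_nonneg] <;> linarith [two_le_of_mem_smallConjugateSet hx]
  · exact one_le_abs_sub_of_mem_smallConjugateSet hx hy hxy

end ZsqrtTwo

theorem div_log_lt_floor_div_four {x : ℝ} (hx : exp 8 ≤ x) : x / log x < ⌊x / 4⌋₊ := by
  have hx8 : 9 ≤ x := by linarith [add_one_le_exp (8 : ℝ)]
  have hlog : 8 ≤ log x := (le_log_iff_exp_le (by linarith)).mpr hx
  calc x / log x ≤ x / 8 := div_le_div_of_nonneg_left (by linarith) (by norm_num) hlog
    _ < x / 4 - 1 := by linarith
    _ < ⌊x / 4⌋₊ := by linarith [Nat.lt_floor_add_one (x / 4)]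

/-- **Theorem 6 (Ruzsa).** There is a set `G` of irrational reals greater than `1` whose
counting function satisfies `G(x) > c·x / log x` for large `x` (for some constant `c > 0`)
and whose generated multiplicative monoid is `1`-separated. -/
theorem stmt_6 : ∃ c : ℝ, 0 < c ∧ ∃ G : Set ℝ,
    (∀ g ∈ G, Irrational g ∧ 1 < g) ∧
    (∃ x₀ : ℝ, ∀ x ≥ x₀, c * x / Real.log x < ((G ∩ Set.Iic x).ncard : ℝ)) ∧
    (∀ x ∈ Submonoid.closure G, ∀ y ∈ Submonoid.closure G, x ≠ y → 1 ≤ |x - y|) := by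
  refine ⟨1, one_pos, ZsqrtTwo.smallConjugateSet, fun g hg => ⟨?_, ?_⟩,
    ⟨exp 8, fun x hx => ?_⟩, fun x hx y hy => ZsqrtTwo.one_le_abs_sub_of_mem_closure hx hy⟩
  · exact ZsqrtTwo.irrational_of_mem_smallConjugateSet hg
  · exact one_lt_two.trans_le (ZsqrtTwo.two_le_of_mem_smallConjugateSet hg)
  · rw [one_mul]
    exact (div_log_lt_floor_div_four hx).trans_le
      (mod_cast ZsqrtTwo.floor_div_four_le_ncard ((exp_pos 8).le.trans hx))
end

section
/- Let E be a set of prime numbers with the sum of 1/p over p ∈ E finite, and let α = a/b > 1 be a rational number that is not an integer (a, b positive integers, b > 1, gcd(a,b) = 1). Then for every δ > 0 there exist a positive integer m and positive integers x, y, neither of which is divisible by any prime in E, such that 0 < |α^m · x − y| < δ. -/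
/-!
If `aᵐ f = bᵐ e + N`, then `x = bᵐ k + f` and `y = aᵐ k + e` satisfy `αᵐ x - y = N / bᵐ` for
every `k`, which lies in `(0, δ)` once `N ∈ {1, 2}` and `bᵐ > 2 / δ`. It remains to choose `k`
with no prime of `E` dividing `x` or `y`. Every single prime admits such a residue class of `k`.
The Chinese remainder theorem handles the finitely many small primes of `E` at once; among the
remaining progression of `k`s, a large prime `p` excludes about a `2 / p` proportion, and these
proportions sum to less than one since `∑ 1 / p` converges.
-/

open Finset

theorem exists_mul_add_ne_zero_and_mul_add_ne_zero {K : Type*} [Field K] [Fintype K]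
    (hK : 2 < Fintype.card K) {u v u' v' : K} (h : u ≠ 0 ∨ v ≠ 0) (h' : u' ≠ 0 ∨ v' ≠ 0) :
    ∃ r, u * r + v ≠ 0 ∧ u' * r + v' ≠ 0 := by
  classical
  have root : ∀ {u v r : K}, u ≠ 0 ∨ v ≠ 0 → u * r + v = 0 → r = -v / u := by
    rintro u v r huv hr
    rcases eq_or_ne u 0 with rfl | hu
    · simp_all
    · field_simp
      linear_combination hr
  obtain ⟨r, -, hr⟩ := exists_mem_notMem_of_card_lt_card
    (s := {-v / u, -v' / u'}) (t := univ) ((card_le_two).trans_lt hK)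
  simp only [mem_insert, mem_singleton, not_or] at hr
  exact ⟨r, fun h0 => hr.1 (root h h0), fun h0 => hr.2 (root h' h0)⟩

theorem ZMod.exists_mul_add_ne_zero_and_mul_add_ne_zero_two : ∀ A B f e N : ZMod 2,
    A * f = B * e + N → (B ≠ 0 ∨ f ≠ 0) → (A ≠ 0 ∨ e ≠ 0) → (A ≠ 0 → B ≠ 0 → N = 0) →
    ∃ r, B * r + f ≠ 0 ∧ A * r + e ≠ 0 := by
  decide

theorem exists_not_dvd_mul_add_and_not_dvd_mul_add {p A B f e N : ℕ} (hp : p.Prime)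
    (hkey : A * f = B * e + N) (hN : N.Coprime (A * B)) (hpar : ¬ 2 ∣ A * B → 2 ∣ N) :
    ∃ r, ¬ p ∣ B * r + f ∧ ¬ p ∣ A * r + e := by
  have := Fact.mk hp
  have hcast : ∀ n : ℕ, p ∣ n ↔ (n : ZMod p) = 0 := fun n => (ZMod.natCast_eq_zero_iff n p).symm
  have hkey' : (A : ZMod p) * f = B * e + N := by
    exact_mod_cast congrArg (Nat.cast : ℕ → ZMod p) hkey
  have hNAB : (N : ZMod p) = 0 → (A : ZMod p) * B ≠ 0 := fun hN0 hAB0 =>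
    hp.one_lt.ne' <| Nat.eq_one_of_dvd_coprimes hN ((hcast N).2 hN0)
      ((hcast _).2 (by simpa using hAB0))
  have hBf : (B : ZMod p) ≠ 0 ∨ (f : ZMod p) ≠ 0 := by
    by_contra! h
    exact hNAB (by simpa [h] using hkey'.symm) (by simp [h])
  have hAe : (A : ZMod p) ≠ 0 ∨ (e : ZMod p) ≠ 0 := by
    by_contra! h
    exact hNAB (by simpa [h] using hkey'.symm) (by simp [h])
  obtain ⟨r, hr⟩ : ∃ r : ZMod p, (B : ZMod p) * r + f ≠ 0 ∧ (A : ZMod p) * r + e ≠ 0 := by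
    by_cases hp2 : p = 2
    · subst hp2
      refine ZMod.exists_mul_add_ne_zero_and_mul_add_ne_zero_two _ _ _ _ _ hkey' hBf hAe
        fun hA hB => (hcast N).1 (hpar fun h2 => ?_)
      exact mul_ne_zero hA hB (by exact_mod_cast (hcast _).1 h2)
    · refine exists_mul_add_ne_zero_and_mul_add_ne_zero ?_ hBf hAe
      rw [ZMod.card]
      exact lt_of_le_of_ne hp.two_le (Ne.symm hp2)
  exact ⟨r.val, by simpa [hcast] using hr.1, by simpa [hcast] using hr.2⟩

theorem Nat.modEq_of_dvd_mul_add {p c d j j' : ℕ} (hp : p.Prime) (hc : ¬ p ∣ c)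
    (h : p ∣ c * j + d) (h' : p ∣ c * j' + d) : j ≡ j' [MOD p] := by
  have := Fact.mk hp
  rw [← ZMod.natCast_eq_natCast_iff]
  rw [← ZMod.natCast_eq_zero_iff] at h h' hc
  push_cast at h h'
  exact mul_left_cancel₀ hc (by linear_combination h - h')

theorem card_filter_dvd_mul_add_le {p c : ℕ} (hp : p.Prime) (hc : ¬ p ∣ c) (d J : ℕ) :
    #{j ∈ range J | p ∣ c * j + d} ≤ J / p + 1 := by
  rcases eq_empty_or_nonempty {j ∈ range J | p ∣ c * j + d} with h | ⟨j₀, hj₀⟩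
  · simp [h]
  have hsub : {j ∈ range J | p ∣ c * j + d} ⊆ {j ∈ range J | j ≡ j₀ [MOD p]} :=
    monotone_filter_right _ fun _ _ hj => Nat.modEq_of_dvd_mul_add hp hc hj (mem_filter.1 hj₀).2
  calc #{j ∈ range J | p ∣ c * j + d} ≤ #{j ∈ range J | j ≡ j₀ [MOD p]} := card_le_card hsub
    _ = J / p + if j₀ % p < J % p then 1 else 0 := by
      rw [← Nat.count_eq_card_filter_range, Nat.count_modEq_card _ hp.pos]
    _ ≤ J / p + 1 := by gcongr; split_ifs <;> simp

theorem exists_forall_of_modEq (s : Finset ℕ) (hs : ∀ p ∈ s, p.Prime) (F : ℕ → ℕ → Prop)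
    (hF : ∀ p k k', k ≡ k' [MOD p] → F p k → F p k') (hex : ∀ p ∈ s, ∃ r, F p r) :
    ∃ k, ∀ p ∈ s, F p k := by
  choose! r hr using hex
  obtain ⟨k, hk⟩ := Nat.chineseRemainderOfFinset r id s (fun p hp => (hs p hp).ne_zero)
    fun p hp q hq hpq => (Nat.coprime_primes (hs p hp) (hs q hq)).2 hpq
  exact ⟨k, fun p hp => hF p _ _ (hk p hp).symm (hr p hp)⟩

section Sieve

variable {E : Set ℕ} {ι : Type*} [Fintype ι]

theorem exists_sum_one_div_lt_of_summable (hsum : Summable (fun p : E => (1 : ℝ) / ((p : ℕ) : ℝ)))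
    {ε : ℝ} (hε : 0 < ε) :
    ∃ P : ℕ, ∀ T : Finset ℕ, ↑T ⊆ E → (∀ q ∈ T, P < q) → ∑ q ∈ T, (1 : ℝ) / q < ε := by
  obtain ⟨s, hs⟩ := summable_iff_vanishing_norm.1
    ((summable_subtype_iff_indicator (f := fun q : ℕ => (1 : ℝ) / q)).1 hsum) ε hε
  refine ⟨s.sup id, fun T hTE hTP => ?_⟩
  have hdisj : Disjoint T s := disjoint_left.2 fun q hqT hqs =>
    (hTP q hqT).not_ge (le_sup (f := id) hqs)
  have := hs T hdisj
  rw [sum_congr rfl fun q hq => Set.indicator_of_mem (hTE hq) _, Real.norm_eq_abs] at this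
  exact (le_abs_self _).trans_lt this

theorem exists_card_le_of_summable (hsum : Summable (fun p : E => (1 : ℝ) / ((p : ℕ) : ℝ)))
    {ε : ℝ} (hε : 0 < ε) :
    ∃ Q : ℕ, ∀ (X : ℕ) (T : Finset ℕ), ↑T ⊆ E → (∀ q ∈ T, q ≤ X) → (#T : ℝ) ≤ Q + ε * X := by
  obtain ⟨P, hP⟩ := exists_sum_one_div_lt_of_summable hsum hε
  refine ⟨P + 1, fun X T hTE hTX => ?_⟩
  have hsmall : #{q ∈ T | q ≤ P} ≤ P + 1 :=
    (card_le_card fun q hq => mem_range.2 (Nat.lt_succ_of_le (mem_filter.1 hq).2)).trans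
      (card_range _).le
  have hlarge : (#{q ∈ T | ¬ q ≤ P} : ℝ) ≤ ε * X := by
    calc (#{q ∈ T | ¬ q ≤ P} : ℝ) = ∑ q ∈ T with ¬ q ≤ P, (1 : ℝ) := by simp
      _ ≤ ∑ q ∈ T with ¬ q ≤ P, (X : ℝ) * (1 / q) := by
        refine sum_le_sum fun q hq => ?_
        obtain ⟨hqT, hqP⟩ := mem_filter.1 hq
        have hq0 : (0 : ℝ) < q := by exact_mod_cast (Nat.zero_le P).trans_lt (not_le.1 hqP)
        rw [mul_one_div, le_div_iff₀ hq0, one_mul]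
        exact_mod_cast hTX q hqT
      _ ≤ X * ε := by
        rw [← mul_sum]
        refine mul_le_mul_of_nonneg_left (hP _ ?_ ?_).le (Nat.cast_nonneg _)
        · exact (coe_subset.2 (filter_subset _ _)).trans hTE
        · exact fun q hq => not_le.1 (mem_filter.1 hq).2
      _ = ε * X := mul_comm _ _
  have hsplit : (#T : ℝ) = #{q ∈ T | q ≤ P} + #{q ∈ T | ¬ q ≤ P} := by
    exact_mod_cast (card_filter_add_card_filter_not (fun q => q ≤ P)).symm
  have hsmall' : (#{q ∈ T | q ≤ P} : ℝ) ≤ P + 1 := by exact_mod_cast hsmall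
  push_cast
  linarith

theorem card_filter_exists_dvd_mul_add_le (c d : ι → ℕ) (S : Finset ℕ)
    (hS : ∀ p ∈ S, p.Prime ∧ ∀ i, ¬ p ∣ c i) (J : ℕ) :
    (#{j ∈ range J | ∃ p ∈ S, ∃ i, p ∣ c i * j + d i} : ℝ) ≤
      Fintype.card ι * (J * ∑ p ∈ S, (1 : ℝ) / p + #S) := by
  classical
  have hsub : {j ∈ range J | ∃ p ∈ S, ∃ i, p ∣ c i * j + d i} ⊆
      S.biUnion fun p => univ.biUnion fun i => {j ∈ range J | p ∣ c i * j + d i} := by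
    intro j hj
    obtain ⟨hjJ, p, hpS, i, hdvd⟩ := mem_filter.1 hj
    exact mem_biUnion.2 ⟨p, hpS, mem_biUnion.2 ⟨i, mem_univ i, mem_filter.2 ⟨hjJ, hdvd⟩⟩⟩
  have hcard : #{j ∈ range J | ∃ p ∈ S, ∃ i, p ∣ c i * j + d i} ≤
      ∑ p ∈ S, Fintype.card ι * (J / p + 1) := by
    refine (card_le_card hsub).trans (card_biUnion_le.trans (sum_le_sum fun p hp => ?_))
    refine card_biUnion_le.trans ?_
    rw [← smul_eq_mul, ← card_univ, ← sum_const]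
    exact sum_le_sum fun i _ => card_filter_dvd_mul_add_le (hS p hp).1 ((hS p hp).2 i) (d i) J
  calc (#{j ∈ range J | ∃ p ∈ S, ∃ i, p ∣ c i * j + d i} : ℝ)
      ≤ ∑ p ∈ S, (Fintype.card ι : ℝ) * ((J / p : ℕ) + 1) := by exact_mod_cast hcard
    _ ≤ ∑ p ∈ S, (Fintype.card ι : ℝ) * (J * (1 / p) + 1) := by
      gcongr with p
      rw [mul_one_div]
      exact Nat.cast_div_le
    _ = Fintype.card ι * (J * ∑ p ∈ S, (1 : ℝ) / p + #S) := by
      rw [← mul_sum, sum_add_distrib, ← mul_sum]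
      simp

theorem exists_lt_forall_not_dvd_mul_add (c d : ι → ℕ) (S : Finset ℕ)
    (hS : ∀ p ∈ S, p.Prime ∧ ∀ i, ¬ p ∣ c i) {J : ℕ}
    (hJ : Fintype.card ι * (J * ∑ p ∈ S, (1 : ℝ) / p + #S) < J) :
    ∃ j < J, ∀ p ∈ S, ∀ i, ¬ p ∣ c i * j + d i := by
  classical
  have hlt : #{j ∈ range J | ∃ p ∈ S, ∃ i, p ∣ c i * j + d i} < #(range J) := by
    rw [card_range, ← Nat.cast_lt (α := ℝ)]
    exact (card_filter_exists_dvd_mul_add_le c d S hS J).trans_lt hJ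
  obtain ⟨j, hjJ, hj⟩ := exists_mem_notMem_of_card_lt_card hlt
  exact ⟨j, mem_range.1 hjJ, fun p hp i hdvd => hj (mem_filter.2 ⟨hjJ, p, hp, i, hdvd⟩)⟩

theorem exists_forall_gt_not_dvd_mul_add (hE : ∀ p ∈ E, p.Prime)
    (hsum : Summable (fun p : E => (1 : ℝ) / ((p : ℕ) : ℝ))) (c d : ι → ℕ) (hc : ∀ i, 0 < c i)
    {P : ℕ} (htail : ∀ T : Finset ℕ, ↑T ⊆ E → (∀ q ∈ T, P < q) →
      ∑ q ∈ T, (1 : ℝ) / q < 1 / (4 * (Fintype.card ι + 1)))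
    (hcP : ∀ p ∈ E, P < p → ∀ i, ¬ p ∣ c i) :
    ∃ j, 0 < j ∧ ∀ p ∈ E, P < p → ∀ i, ¬ p ∣ c i * j + d i := by
  classical
  set n : ℝ := (Fintype.card ι : ℝ)
  set ε : ℝ := 1 / (4 * (n + 1))
  have hε : 0 < ε := by positivity
  set C := ∑ i, (c i + d i)
  obtain ⟨Q, hQ⟩ := exists_card_le_of_summable hsum (ε := ε / (C + 1)) (by positivity)
  set J := 2 * (Fintype.card ι + 1) * (Q + 1)
  set S := {p ∈ range (C * J + 1) | p ∈ E ∧ P < p}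
  have hSE : ↑S ⊆ E := fun p hp => (mem_filter.1 hp).2.1
  have hS : ∀ p ∈ S, p.Prime ∧ ∀ i, ¬ p ∣ c i := fun p hp =>
    ⟨hE p (mem_filter.1 hp).2.1, hcP p (mem_filter.1 hp).2.1 (mem_filter.1 hp).2.2⟩
  have hJ : (J : ℝ) = 2 * (n + 1) * (Q + 1) := by simp [J, n]
  have hεJ : 2 * ε * J = Q + 1 := by
    have hn : n + 1 ≠ 0 := by positivity
    rw [hJ]
    simp only [ε]
    field_simp
    ring
  have hsumS : J * ∑ p ∈ S, (1 : ℝ) / p ≤ J * ε := by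
    gcongr
    exact (htail S hSE fun q hq => (mem_filter.1 hq).2.2).le
  have hcardS : (#S : ℝ) ≤ Q + ε * J := by
    refine (hQ (C * J) S hSE fun q hq =>
      Nat.lt_succ_iff.1 (mem_range.1 (mem_filter.1 hq).1)).trans ?_
    rw [add_le_add_iff_left, div_mul_eq_mul_div, div_le_iff₀ (by positivity)]
    push_cast
    nlinarith [hε, (Nat.cast_nonneg J : (0 : ℝ) ≤ J)]
  -- sieving the values at `j + 1` rather than `j` keeps them all positive
  obtain ⟨j, hjJ, hj⟩ := exists_lt_forall_not_dvd_mul_add c (fun i => c i + d i) S hS (J := J) <|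
    calc n * (J * ∑ p ∈ S, (1 : ℝ) / p + #S) ≤ n * (2 * ε * J + Q) := by
          gcongr n * ?_
          linarith
      _ = n * (Q + 1) + n * Q := by rw [mul_add, hεJ]
      _ < J := by
        rw [hJ]
        nlinarith [(Nat.cast_nonneg Q : (0 : ℝ) ≤ Q), (Nat.cast_nonneg _ : (0 : ℝ) ≤ n)]
  refine ⟨j + 1, j.succ_pos, fun p hpE hPp i hdvd => ?_⟩
  have hle : c i * (j + 1) + d i ≤ C * J :=
    calc c i * (j + 1) + d i ≤ (c i + d i) * J := by nlinarith
      _ ≤ C * J := Nat.mul_le_mul_right _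
          (single_le_sum (f := fun i => c i + d i) (fun _ _ => Nat.zero_le _) (mem_univ i))
  have hpS : p ∈ S := by
    have hpos : 0 < c i * (j + 1) + d i := Nat.add_pos_left (Nat.mul_pos (hc i) j.succ_pos) _
    exact mem_filter.2 ⟨mem_range.2 (Nat.lt_succ_of_le ((Nat.le_of_dvd hpos hdvd).trans hle)),
      hpE, hPp⟩
  exact hj p hpS i (by rwa [← add_assoc, ← mul_add_one])

theorem exists_forall_not_dvd_mul_add (hE : ∀ p ∈ E, p.Prime)
    (hsum : Summable (fun p : E => (1 : ℝ) / ((p : ℕ) : ℝ))) (c d : ι → ℕ) (hc : ∀ i, 0 < c i)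
    (hloc : ∀ p ∈ E, ∃ r, ∀ i, ¬ p ∣ c i * r + d i) :
    ∃ k, 0 < k ∧ ∀ p ∈ E, ∀ i, ¬ p ∣ c i * k + d i := by
  classical
  obtain ⟨P₀, hP₀⟩ := exists_sum_one_div_lt_of_summable hsum
    (ε := 1 / (4 * (Fintype.card ι + 1))) (by positivity)
  set P := P₀ + ∑ i, c i
  set T := {p ∈ range (P + 1) | p ∈ E}
  have hT : ∀ p ∈ T, p.Prime ∧ p ≤ P := fun p hp =>
    ⟨hE p (mem_filter.1 hp).2, Nat.lt_succ_iff.1 (mem_range.1 (mem_filter.1 hp).1)⟩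
  obtain ⟨k₀, hk₀⟩ := exists_forall_of_modEq T (fun p hp => (hT p hp).1)
    (fun p k => ∀ i, ¬ p ∣ c i * k + d i)
    (fun p k k' hk h i hdvd => h i ((((hk.mul_left (c i)).add_right (d i)).dvd_iff dvd_rfl).2 hdvd))
    (fun p hp => hloc p (mem_filter.1 hp).2)
  set W := ∏ p ∈ T, p
  have hW : ∀ p ∈ E, P < p → ∀ i, ¬ p ∣ c i * W := by
    intro p hpE hPp i hdvd
    rcases (hE p hpE).dvd_mul.1 hdvd with hpc | hpW
    · have : c i ≤ P := le_add_left (single_le_sum (fun _ _ => Nat.zero_le _) (mem_univ i))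
      exact absurd (Nat.le_of_dvd (hc i) hpc) (by omega)
    · obtain ⟨q, hqT, hpq⟩ := ((hE p hpE).prime.dvd_finsetProd_iff _).1 hpW
      have := Nat.le_of_dvd (hT q hqT).1.pos hpq
      exact absurd (hT q hqT).2 (by omega)
  have hW0 : 0 < W := prod_pos fun p hp => (hT p hp).1.pos
  obtain ⟨j, hj, hgood⟩ := exists_forall_gt_not_dvd_mul_add hE hsum
    (fun i => c i * W) (fun i => c i * k₀ + d i) (fun i => Nat.mul_pos (hc i) hW0)
    (fun T hTE hTP => hP₀ T hTE fun q hq => by have := hTP q hq; omega) hW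
  refine ⟨k₀ + W * j, by positivity, fun p hpE i => ?_⟩
  rw [show c i * (k₀ + W * j) + d i = c i * W * j + (c i * k₀ + d i) by ring]
  by_cases hPp : P < p
  · exact hgood p hpE hPp i
  · have hpT : p ∈ T := mem_filter.2 ⟨mem_range.2 (by omega), hpE⟩
    have hpW : p ∣ c i * W * j := ((dvd_prod_of_mem id hpT).mul_left _).mul_right _
    rw [Nat.dvd_add_right hpW]
    exact hk₀ p hpT i

end Sieve

theorem div_pow_mul_add_sub_eq {K : Type*} [Field K] {a b f e N : K} (hb : b ≠ 0) (m : ℕ)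
    (k : K) (h : a ^ m * f = b ^ m * e + N) :
    (a / b) ^ m * (b ^ m * k + f) - (a ^ m * k + e) = N / b ^ m := by
  rw [div_pow, eq_div_iff (pow_ne_zero m hb)]
  field_simp
  linear_combination h

theorem Nat.exists_mul_eq_mul_add_of_coprime {A B : ℕ} (hAB : A.Coprime B) (hB : 1 < B)
    (N : ℕ) : ∃ f e, A * f = B * e + N := by
  obtain ⟨u, -, hu⟩ := Nat.exists_mul_mod_eq_one_of_coprime hAB hB
  refine ⟨u * N, A * u / B * N, ?_⟩
  calc A * (u * N) = (B * (A * u / B) + A * u % B) * N := by rw [Nat.div_add_mod]; ring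
    _ = B * (A * u / B * N) + N := by rw [hu]; ring

theorem Nat.exists_coprime_and_two_dvd_of_not_two_dvd (n : ℕ) :
    ∃ N, 0 < N ∧ N ≤ 2 ∧ N.Coprime n ∧ (¬ 2 ∣ n → 2 ∣ N) := by
  by_cases h : 2 ∣ n
  · exact ⟨1, one_pos, one_le_two, Nat.coprime_one_left n, fun h' => absurd h h'⟩
  · exact ⟨2, two_pos, le_rfl, (Nat.prime_two.coprime_iff_not_dvd).2 h, fun _ => dvd_rfl⟩

theorem stmt_8_general (E : Set ℕ) (hE : ∀ p ∈ E, p.Prime)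
    (hsum : Summable (fun p : E => (1 : ℝ) / ((p : ℕ) : ℝ)))
    (a b : ℕ) (ha : 0 < a) (hb : 1 < b) (hab : Nat.Coprime a b)
    (α : ℝ) (hα : α = (a : ℝ) / (b : ℝ)) :
    ∀ δ > 0, ∃ m x y : ℕ, 0 < m ∧ 0 < x ∧ 0 < y ∧
      (∀ p ∈ E, ¬ p ∣ x) ∧ (∀ p ∈ E, ¬ p ∣ y) ∧
      0 < |α ^ m * (x : ℝ) - (y : ℝ)| ∧ |α ^ m * (x : ℝ) - (y : ℝ)| < δ := by
  intro δ hδ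
  have hbR : (1 : ℝ) < b := by exact_mod_cast hb
  obtain ⟨m, hm0, hm⟩ : ∃ m, 0 < m ∧ 2 / δ < (b : ℝ) ^ m := by
    obtain ⟨m, hm⟩ := pow_unbounded_of_one_lt (2 / δ) hbR
    exact ⟨m + 1, m.succ_pos, hm.trans_le (pow_le_pow_right₀ hbR.le m.le_succ)⟩
  -- `x = bᵐ k + f`, `y = aᵐ k + e` satisfy `aᵐ x - bᵐ y = N`: a common prime factor of `N` and
  -- `a b` would divide `x` or `y`, and `N` must be even when `a`, `b`, `x`, `y` are all odd
  obtain ⟨N, hN0, hN2, hNab, hpar⟩ := Nat.exists_coprime_and_two_dvd_of_not_two_dvd (a ^ m * b ^ m)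
  obtain ⟨f, e, hkey⟩ :=
    Nat.exists_mul_eq_mul_add_of_coprime (hab.pow m m) (Nat.one_lt_pow hm0.ne' hb) N
  obtain ⟨k, hk, hkE⟩ := exists_forall_not_dvd_mul_add hE hsum ![b ^ m, a ^ m] ![f, e]
    (Fin.forall_fin_two.2 ⟨pow_pos (by omega) m, pow_pos ha m⟩) fun p hp => by
      obtain ⟨r, hr⟩ := exists_not_dvd_mul_add_and_not_dvd_mul_add (hE p hp) hkey hNab hpar
      exact ⟨r, by simpa [Fin.forall_fin_two] using hr⟩
  simp only [Fin.forall_fin_two] at hkE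
  have hdiff : α ^ m * ((b ^ m * k + f : ℕ) : ℝ) - ((a ^ m * k + e : ℕ) : ℝ) = N / (b : ℝ) ^ m := by
    push_cast
    rw [hα]
    exact div_pow_mul_add_sub_eq (zero_lt_one.trans hbR).ne' m k (by exact_mod_cast hkey)
  refine ⟨m, b ^ m * k + f, a ^ m * k + e, hm0, by positivity, by positivity,
    fun p hp => by simpa using (hkE p hp).1, fun p hp => by simpa using (hkE p hp).2, ?_, ?_⟩ <;>
    rw [hdiff, abs_of_pos (by positivity)]
  · positivity
  · calc (N : ℝ) / b ^ m ≤ 2 / b ^ m := by gcongr; exact_mod_cast hN2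
      _ < δ := (div_lt_iff₀ (by positivity)).2 ((div_lt_iff₀ hδ).1 hm |>.trans_eq (mul_comm _ _))

/-- Case 1 of the proof of Theorem 1: for a set `E` of primes with convergent sum of
reciprocals and a non-integer rational `α = a/b > 1` in lowest terms, for every `δ > 0`
there are a positive integer `m` and positive integers `x, y` free of prime factors from
`E` with `0 < |αᵐ·x − y| < δ`. -/
theorem stmt_8 (E : Set ℕ) (hE : ∀ p ∈ E, p.Prime)
    (hsum : Summable (fun p : E => (1 : ℝ) / ((p : ℕ) : ℝ)))
    (a b : ℕ) (ha : 0 < a) (hb : 1 < b) (hab : Nat.Coprime a b)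
    (α : ℝ) (hα : α = (a : ℝ) / (b : ℝ)) (hα1 : 1 < α) :
    ∀ δ > 0, ∃ m x y : ℕ, 0 < m ∧ 0 < x ∧ 0 < y ∧
      (∀ p ∈ E, ¬ p ∣ x) ∧ (∀ p ∈ E, ¬ p ∣ y) ∧
      0 < |α ^ m * (x : ℝ) - (y : ℝ)| ∧ |α ^ m * (x : ℝ) - (y : ℝ)| < δ :=
  stmt_8_general E hE hsum a b ha hb hab α hα
end

section
/- Let δ > 0 and let B′ be a countable subset of [1, ∞) such that S = Σ_{m ∈ B′} 1/√m is finite. Then there exists t₀ > 0 such that for all t ≥ t₀, the Lebesgue measure of the set {β ∈ [t, 2t] : there exist a positive integer k and m, n ∈ B′ with |e^{kβ}·m − n| < δ} is at most 6·(1 + log 6)·δ·e^{−t/2}·S². -/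
open MeasureTheory

lemma aux_prod {X : Type*} (u : ℕ → ENNReal) (g : X → ENNReal) :
    ∑' p : ℕ × X × X, u p.1 * (g p.2.1 * g p.2.2)
      = (∑' k, u k) * ((∑' x, g x) * (∑' x, g x)) := by
  calc ∑' p : ℕ × X × X, u p.1 * (g p.2.1 * g p.2.2)
      = ∑' (k : ℕ) (q : X × X), u k * (g q.1 * g q.2) := ENNReal.tsum_prod (f := fun (k:ℕ) (q : X × X) => u k * (g q.1 * g q.2))
    _ = (∑' k, u k) * (∑' q : X × X, g q.1 * g q.2) := by
        simp_rw [ENNReal.tsum_mul_left]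
        rw [ENNReal.tsum_mul_right]
    _ = (∑' k, u k) * ((∑' x, g x) * (∑' x, g x)) := by
        congr 1
        calc ∑' q : X × X, g q.1 * g q.2 = ∑' (a : X) (b : X), g a * g b := ENNReal.tsum_prod (f := fun (a:X) (b:X) => g a * g b)
          _ = (∑' x, g x) * (∑' x, g x) := by
              simp_rw [ENNReal.tsum_mul_left]
              rw [ENNReal.tsum_mul_right]
lemma aux_geom {x : ENNReal} (hx : x ≤ 2⁻¹) : ∑' k : ℕ, x ^ (k + 1) ≤ 2 * x := by
  have h1 : ∑' k : ℕ, x ^ (k + 1) = (∑' k : ℕ, x ^ k) * x := by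
    simp_rw [pow_succ]
    rw [ENNReal.tsum_mul_right]
  rw [h1, ENNReal.tsum_geometric]
  have h2 : (2:ENNReal)⁻¹ ≤ 1 - x := by
    calc (2:ENNReal)⁻¹ = 1 - 2⁻¹ := by
          rw [ENNReal.one_sub_inv_two]
      _ ≤ 1 - x := tsub_le_tsub_left hx 1
  have h3 : (1 - x)⁻¹ ≤ 2 := by
    calc (1 - x)⁻¹ ≤ ((2:ENNReal)⁻¹)⁻¹ := ENNReal.inv_le_inv.2 h2
      _ = 2 := inv_inv 2
  exact mul_le_mul_left h3 x



set_option maxHeartbeats 1000000 in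
/-- The measure estimate at the heart of the proof of Theorems 2 and 3: for a countable
`B' ⊆ [1, ∞)` with `S = ∑_{m ∈ B'} 1/√m < ∞`, for all large `t` the set of `β ∈ [t, 2t]`
for which some `|e^{kβ}m − n| < δ` (`k ≥ 1`, `m, n ∈ B'`) has measure at most
`6(1 + log 6)·δ·e^{−t/2}·S²`. -/
theorem stmt_11 (δ : ℝ) (hδ : 0 < δ) (B' : Set ℝ) (hBc : B'.Countable)
    (hB1 : B' ⊆ Set.Ici 1)
    (hsum : Summable (fun m : B' => 1 / Real.sqrt (m : ℝ))) :
    ∃ t₀ > 0, ∀ t ≥ t₀,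
      volume {β ∈ Set.Icc t (2 * t) | ∃ k : ℕ, 0 < k ∧ ∃ m ∈ B', ∃ n ∈ B',
          |Real.exp ((k : ℝ) * β) * m - n| < δ} ≤
        ENNReal.ofReal (6 * (1 + Real.log 6) * δ * Real.exp (-t / 2) *
          (∑' m : B', 1 / Real.sqrt (m : ℝ)) ^ 2) := by
  haveI := hBc.to_subtype
  set S : ℝ := ∑' m : B', 1 / Real.sqrt (m : ℝ) with hSdef
  have hS0 : 0 ≤ S := tsum_nonneg fun m => by positivity
  have hlogpos : 0 < Real.log (3 * δ + 3) := Real.log_pos (by linarith)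
  refine ⟨Real.log (3 * δ + 3) + 2, by linarith, ?_⟩
  intro t ht
  have ht2 : (2:ℝ) ≤ t := by linarith
  have ht0 : (0:ℝ) < t := by linarith
  have hexpt : 3 * δ + 3 ≤ Real.exp t := by
    have h1 : Real.log (3 * δ + 3) ≤ t := by linarith
    calc 3 * δ + 3 = Real.exp (Real.log (3 * δ + 3)) := by
          rw [Real.exp_log (by linarith)]
      _ ≤ Real.exp t := Real.exp_le_exp.2 h1
  set r : ℝ := Real.exp (-t / 2) with hrdef
  have hr0 : 0 < r := Real.exp_pos _
  have hrhalf : r ≤ 1 / 2 := by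
    have h1 : Real.exp (-t / 2) ≤ Real.exp (-1) := Real.exp_le_exp.2 (by linarith)
    have h2 : Real.exp (-1) ≤ 1 / 2 := by
      have h3 : (2:ℝ) ≤ Real.exp 1 := by nlinarith [Real.exp_one_gt_d9]
      rw [Real.exp_neg]
      have h4 : (Real.exp 1)⁻¹ ≤ (2:ℝ)⁻¹ := by gcongr
      simpa using h4
    linarith
  have hr1 : r < 1 := by linarith
  -- the family of sets
  set A : ℕ × B' × B' → Set ℝ := fun p =>
    Set.Icc t (2 * t) ∩ {β | |Real.exp (((p.1 : ℝ) + 1) * β) * (p.2.1 : ℝ) - (p.2.2 : ℝ)| < δ}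
    with hAdef
  have hsub : {β ∈ Set.Icc t (2 * t) | ∃ k : ℕ, 0 < k ∧ ∃ m ∈ B', ∃ n ∈ B',
      |Real.exp ((k : ℝ) * β) * m - n| < δ} ⊆ ⋃ p, A p := by
    rintro β ⟨hβIcc, k, hk, m, hm, n, hn, habs⟩
    refine Set.mem_iUnion.2 ⟨⟨k - 1, ⟨m, hm⟩, ⟨n, hn⟩⟩, hβIcc, ?_⟩
    have : ((k - 1 : ℕ) : ℝ) + 1 = (k : ℝ) := by
      have : (1:ℕ) ≤ k := hk
      push_cast [Nat.cast_sub this]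
      ring
    simpa [hAdef, this] using habs
  -- per-triple bound
  have key : ∀ p : ℕ × B' × B', volume (A p) ≤
      ENNReal.ofReal ((4 * Real.sqrt 2 * δ * r ^ (p.1 + 1)) *
        ((1 / Real.sqrt (p.2.1 : ℝ)) * (1 / Real.sqrt (p.2.2 : ℝ)))) := by
    rintro ⟨k, m, n⟩
    set K : ℝ := (k : ℝ) + 1 with hKdef
    have hK1 : (1:ℝ) ≤ K := by
      rw [hKdef]; have : (0:ℝ) ≤ (k:ℝ) := Nat.cast_nonneg k; linarith
    have hK0 : (0:ℝ) < K := by linarith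
    have hm1 : (1:ℝ) ≤ (m : ℝ) := hB1 m.2
    have hn1 : (1:ℝ) ≤ (n : ℝ) := hB1 n.2
    have hm0 : (0:ℝ) < (m : ℝ) := by linarith
    have hn0 : (0:ℝ) < (n : ℝ) := by linarith
    rcases Set.eq_empty_or_nonempty (A (k, m, n)) with hA | ⟨β₀, hβ₀⟩
    · rw [hA]; simp
    · obtain ⟨⟨hβt, hβ2t⟩, habs⟩ := hβ₀
      rw [Set.mem_setOf_eq, abs_lt] at habs
      -- n is large
      have hexpKt : Real.exp t ≤ Real.exp (K * β₀) * m := by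
        have h1 : Real.exp t ≤ Real.exp (K * β₀) :=
          Real.exp_le_exp.2 (by nlinarith)
        nlinarith [Real.exp_pos (K * β₀)]
      have hnδ : 2 * δ + 3 ≤ (n : ℝ) := by
        have h2 := habs.2
        linarith
      have hδn : δ ≤ (n : ℝ) / 2 := by linarith
      -- m e^{Kt} ≤ 2 n
      have hmKt : (m : ℝ) * Real.exp (K * t) ≤ 2 * n := by
        have h1 : Real.exp (K * t) ≤ Real.exp (K * β₀) :=
          Real.exp_le_exp.2 (by nlinarith)
        have h1' : (m : ℝ) * Real.exp (K * t) ≤ (m : ℝ) * Real.exp (K * β₀) :=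
          mul_le_mul_of_nonneg_left h1 (by linarith)
        have h2 := habs.2
        linarith
      have hnd0 : (0:ℝ) < (n : ℝ) - δ := by linarith
      -- interval containment
      have hIoo : A (k, m, n) ⊆
          Set.Ioo (Real.log (((n : ℝ) - δ) / m) / K) (Real.log (((n : ℝ) + δ) / m) / K) := by
        rintro β ⟨⟨hbt, hb2t⟩, hb⟩
        rw [Set.mem_setOf_eq, abs_lt] at hb
        have hlow : ((n : ℝ) - δ) / m < Real.exp (K * β) := by
          rw [div_lt_iff₀ hm0]; linarith [hb.1]
        have hhigh : Real.exp (K * β) < ((n : ℝ) + δ) / m := by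
          rw [lt_div_iff₀ hm0]; linarith [hb.2]
        constructor
        · rw [div_lt_iff₀ hK0, mul_comm]
          exact (Real.log_lt_iff_lt_exp (div_pos hnd0 hm0)).2 hlow
        · rw [lt_div_iff₀ hK0, mul_comm]
          exact (Real.lt_log_iff_exp_lt (div_pos (by linarith) hm0)).2 hhigh
      refine le_trans (measure_mono hIoo) ?_
      rw [Real.volume_Ioo]
      apply ENNReal.ofReal_le_ofReal
      have hlen : Real.log (((n : ℝ) + δ) / m) / K - Real.log (((n : ℝ) - δ) / m) / K
          ≤ 4 * δ / n := by
        have hlog : Real.log (((n : ℝ) + δ) / m) - Real.log (((n : ℝ) - δ) / m)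
            = Real.log (((n : ℝ) + δ) / ((n : ℝ) - δ)) := by
          rw [Real.log_div (by positivity) (by positivity),
            Real.log_div (by positivity) (by positivity),
            Real.log_div (by positivity) (by positivity)]
          ring
        have h1 : Real.log (((n : ℝ) + δ) / ((n : ℝ) - δ)) ≤ 2 * δ / ((n : ℝ) - δ) := by
          have := Real.log_le_sub_one_of_pos (show (0:ℝ) < ((n : ℝ) + δ) / ((n : ℝ) - δ) by positivity)
          have heq : ((n : ℝ) + δ) / ((n : ℝ) - δ) - 1 = 2 * δ / ((n : ℝ) - δ) := by
            field_simp; ring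
          linarith [heq ▸ this]
        have h2 : 2 * δ / ((n : ℝ) - δ) ≤ 4 * δ / n := by
          rw [div_le_div_iff₀ hnd0 hn0]; nlinarith
        have h3 : Real.log (((n : ℝ) + δ) / m) / K - Real.log (((n : ℝ) - δ) / m) / K
            = (Real.log (((n : ℝ) + δ) / m) - Real.log (((n : ℝ) - δ) / m)) / K := by ring
        have h4 : (Real.log (((n : ℝ) + δ) / m) - Real.log (((n : ℝ) - δ) / m)) / K
            ≤ Real.log (((n : ℝ) + δ) / m) - Real.log (((n : ℝ) - δ) / m) := by
          rw [hlog, div_le_iff₀ hK0]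
          have hX : 0 ≤ Real.log (((n : ℝ) + δ) / ((n : ℝ) - δ)) :=
            Real.log_nonneg (by rw [le_div_iff₀ hnd0]; linarith)
          nlinarith [mul_le_mul_of_nonneg_left hK1 hX]
        rw [h3]
        calc _ ≤ _ := h4
          _ = _ := hlog
          _ ≤ _ := le_trans h1 h2
      refine le_trans hlen ?_
      -- 4δ/n ≤ 4√2 δ r^{k+1} / (√m √n)
      have hsm : Real.sqrt m * Real.exp (K * t / 2) ≤ Real.sqrt 2 * Real.sqrt n := by
        have h1 := Real.sqrt_le_sqrt hmKt
        rw [Real.sqrt_mul (le_of_lt hm0), Real.sqrt_mul (by norm_num : (0:ℝ) ≤ 2),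
          ← Real.exp_half] at h1
        exact h1
      have hrK : r ^ (k + 1) = (Real.exp (K * t / 2))⁻¹ := by
        rw [hrdef, ← Real.exp_nat_mul, ← Real.exp_neg]
        congr 1
        push_cast [hKdef]
        ring
      have hsqm0 : (0:ℝ) < Real.sqrt m := Real.sqrt_pos.2 hm0
      have hsqn0 : (0:ℝ) < Real.sqrt n := Real.sqrt_pos.2 hn0
      have hE0 : (0:ℝ) < Real.exp (K * t / 2) := Real.exp_pos _
      have hnn : Real.sqrt n * Real.sqrt n = n := Real.mul_self_sqrt (le_of_lt hn0)
      have h5 : 4 * δ / (n:ℝ) ≤ (4 * Real.sqrt 2 * δ) /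
          (Real.exp (K * t / 2) * Real.sqrt m * Real.sqrt n) := by
        rw [div_le_div_iff₀ hn0 (by positivity)]
        have hh : 4 * δ * Real.sqrt n * (Real.sqrt m * Real.exp (K * t / 2))
            ≤ 4 * δ * Real.sqrt n * (Real.sqrt 2 * Real.sqrt n) :=
          mul_le_mul_of_nonneg_left hsm (by positivity)
        have hnn' : 4 * δ * Real.sqrt n * (Real.sqrt 2 * Real.sqrt n)
            = 4 * Real.sqrt 2 * δ * (n : ℝ) := by
          linear_combination (4 * Real.sqrt 2 * δ) * hnn
        nlinarith [hh, hnn']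
      refine le_trans h5 (le_of_eq ?_)
      rw [hrK]
      field_simp
  -- combine
  refine le_trans (le_trans (measure_mono hsub) (measure_iUnion_le A)) ?_
  refine le_trans (ENNReal.tsum_le_tsum key) ?_
  clear hsub key
  have hpt : ∀ p : ℕ × B' × B',
      ENNReal.ofReal ((4 * Real.sqrt 2 * δ * r ^ (p.1 + 1)) *
        ((1 / Real.sqrt ((p.2.1 : ℝ))) * (1 / Real.sqrt ((p.2.2 : ℝ)))))
      = (ENNReal.ofReal (4 * Real.sqrt 2 * δ) * ENNReal.ofReal r ^ (p.1 + 1)) *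
        (ENNReal.ofReal (1 / Real.sqrt ((p.2.1 : ℝ))) *
          ENNReal.ofReal (1 / Real.sqrt ((p.2.2 : ℝ)))) := by
    intro p
    rw [ENNReal.ofReal_mul (show (0:ℝ) ≤ 4 * Real.sqrt 2 * δ * r ^ (p.1 + 1) by positivity),
      ENNReal.ofReal_mul (show (0:ℝ) ≤ 4 * Real.sqrt 2 * δ by positivity),
      ENNReal.ofReal_mul (show (0:ℝ) ≤ 1 / Real.sqrt ((p.2.1 : ℝ)) by positivity),
      ENNReal.ofReal_pow (le_of_lt hr0)]
  rw [tsum_congr hpt,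
    aux_prod (fun k => ENNReal.ofReal (4 * Real.sqrt 2 * δ) * ENNReal.ofReal r ^ (k + 1))
      (fun x : B' => ENNReal.ofReal (1 / Real.sqrt ((x : ℝ))))]
  have hgS : (∑' x : B', ENNReal.ofReal (1 / Real.sqrt ((x : ℝ)))) = ENNReal.ofReal S := by
    rw [hSdef, ENNReal.ofReal_tsum_of_nonneg (fun m => by positivity) hsum]
  rw [hgS]
  have hksum : (∑' k : ℕ, ENNReal.ofReal (4 * Real.sqrt 2 * δ) * ENNReal.ofReal r ^ (k + 1))
      ≤ ENNReal.ofReal (4 * Real.sqrt 2 * δ) * (2 * ENNReal.ofReal r) := by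
    rw [ENNReal.tsum_mul_left]
    refine mul_le_mul_right ?_ _
    refine aux_geom ?_
    calc ENNReal.ofReal r ≤ ENNReal.ofReal ((2:ℝ)⁻¹) :=
          ENNReal.ofReal_le_ofReal (by linarith)
      _ = (2:ENNReal)⁻¹ := by
          rw [ENNReal.ofReal_inv_of_pos (by norm_num)]; norm_num
  refine le_trans (mul_le_mul_left hksum _) ?_
  have hEq : ENNReal.ofReal (4 * Real.sqrt 2 * δ) * (2 * ENNReal.ofReal r) *
      (ENNReal.ofReal S * ENNReal.ofReal S)
      = ENNReal.ofReal (4 * Real.sqrt 2 * δ * (2 * r) * (S * S)) := by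
    rw [ENNReal.ofReal_mul (show (0:ℝ) ≤ 4 * Real.sqrt 2 * δ * (2 * r) by positivity),
      ENNReal.ofReal_mul (show (0:ℝ) ≤ 4 * Real.sqrt 2 * δ by positivity),
      ENNReal.ofReal_mul (show (0:ℝ) ≤ (2:ℝ) by norm_num),
      ENNReal.ofReal_mul (show (0:ℝ) ≤ S from hS0)]
    norm_num
  rw [hEq]
  apply ENNReal.ofReal_le_ofReal
  have hsqrt2 : Real.sqrt 2 ≤ 1.5 := by
    rw [show (1.5:ℝ) = Real.sqrt (1.5 ^ 2) from (Real.sqrt_sq (by norm_num)).symm]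
    apply Real.sqrt_le_sqrt; norm_num
  have hlog6 : 1 ≤ Real.log 6 := by
    rw [Real.le_log_iff_exp_le (by norm_num)]
    nlinarith [Real.exp_one_lt_d9]
  have hcmp : 8 * Real.sqrt 2 ≤ 6 * (1 + Real.log 6) := by nlinarith
  have hfac : (0:ℝ) ≤ δ * r * (S * S) := by positivity
  nlinarith [mul_le_mul_of_nonneg_right hcmp hfac]
end

section
/- Let q ≥ 2 be a squarefree integer and let u, v, m, n be positive integers. Then |(u·√q + v)²·m² − n²| > 1. -/
/-- The key inequality in the proof of Theorem 4: for a squarefree `q ≥ 2` and positive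
integers `u, v, m, n` one has `|(u√q + v)²m² − n²| > 1`. -/
theorem stmt_12 (q : ℕ) (hq2 : 2 ≤ q) (hq : Squarefree q)
    (u v m n : ℕ) (hu : 0 < u) (hv : 0 < v) (hm : 0 < m) (hn : 0 < n) :
    1 < |((u : ℝ) * Real.sqrt q + (v : ℝ)) ^ 2 * (m : ℝ) ^ 2 - (n : ℝ) ^ 2| := by
  have hq0 : (0 : ℝ) ≤ (q : ℝ) := by positivity
  set s := Real.sqrt q with hsdef
  have hs2 : s ^ 2 = (q : ℝ) := Real.sq_sqrt hq0
  have hs1 : 1 < s := by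
    have h2 : (1 : ℝ) < (q : ℝ) := by exact_mod_cast (by omega : 1 < q)
    nlinarith [Real.sqrt_nonneg (q : ℝ)]
  have hnsq : ¬ IsSquare q := by
    rintro ⟨k, hk⟩
    have hk1 : k = 1 := Nat.isUnit_iff.mp (hq k ⟨1, by simpa using hk⟩)
    rw [hk1] at hk
    omega
  have hirr : Irrational s := irrational_sqrt_natCast_iff.mpr hnsq
  set D : ℝ := (u : ℝ) * (m : ℝ) with hD
  set C : ℝ := (n : ℝ) - (v : ℝ) * (m : ℝ) with hC
  have hvm : (1 : ℝ) ≤ (v : ℝ) * (m : ℝ) := by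
    have : (1 : ℕ) ≤ v * m := Nat.one_le_iff_ne_zero.mpr (by positivity)
    exact_mod_cast this
  have hn1 : (1 : ℝ) ≤ (n : ℝ) := by exact_mod_cast hn
  have hD1 : (1 : ℝ) ≤ D := by
    have h1 : (1 : ℕ) ≤ u * m := Nat.one_le_iff_ne_zero.mpr (by positivity)
    have h2 : (1 : ℝ) ≤ ((u * m : ℕ) : ℝ) := by exact_mod_cast h1
    rw [hD]; push_cast at h2 ⊢; linarith
  have hDsgt : 1 < D * s :=
    lt_of_lt_of_le hs1 (le_mul_of_one_le_left (by linarith) hD1)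
  -- cast helpers
  have hcastD : ((u * m : ℕ) : ℝ) = D := by rw [hD]; push_cast; ring
  have hcastC : (((n : ℤ) - (v : ℤ) * (m : ℤ) : ℤ) : ℝ) = C := by rw [hC]; push_cast; ring
  -- the expression factorizes
  have hfac : ((u : ℝ) * s + (v : ℝ)) ^ 2 * (m : ℝ) ^ 2 - (n : ℝ) ^ 2
      = (D * s - C) * (D * s + C + 2 * ((v:ℝ) * (m:ℝ))) := by
    rw [hD, hC]; ring
  have hDsirr : Irrational ((u * m : ℕ) * s) := hirr.natCast_mul (by positivity)
  have hne : D * s ≠ C := by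
    intro h
    apply hDsirr.ne_int ((n : ℤ) - (v : ℤ) * (m : ℤ))
    rw [hcastD, hcastC]; exact h
  -- integer gap
  have hgap : (1 : ℝ) ≤ |D ^ 2 * (q : ℝ) - C ^ 2| := by
    have hz : ((u*m : ℤ))^2 * (q : ℤ) - ((n : ℤ) - (v : ℤ) * (m : ℤ))^2 ≠ 0 := by
      intro h0
      have hre : D ^ 2 * (q : ℝ) - C ^ 2 = 0 := by
        have hc := congrArg (fun z : ℤ => (z : ℝ)) h0
        push_cast at hc
        rw [hD, hC]
        linear_combination hc
      have hsq : (D * s) ^ 2 = C ^ 2 := by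
        have he : (D * s) ^ 2 = D ^ 2 * (q : ℝ) := by rw [← hs2]; ring
        linarith
      rcases sq_eq_sq_iff_eq_or_eq_neg.mp hsq with h | h
      · exact hne h
      · apply hDsirr.ne_int (-((n : ℤ) - (v : ℤ) * (m : ℤ)))
        rw [hcastD, Int.cast_neg, hcastC]; exact h
    have h1 : (1 : ℤ) ≤ |((u*m : ℤ))^2 * (q : ℤ) - ((n : ℤ) - (v : ℤ) * (m : ℤ))^2| :=
      Int.one_le_abs hz
    have h2 : (1 : ℝ) ≤ |((((u*m : ℤ))^2 * (q : ℤ) - ((n : ℤ) - (v : ℤ) * (m : ℤ))^2 : ℤ) : ℝ)| := by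
      rw [← Int.cast_abs]; exact_mod_cast h1
    convert h2 using 2
    rw [hD, hC]; push_cast; ring
  rw [hfac]
  have h2f : D * s + C + 2 * ((v:ℝ) * (m:ℝ)) = D * s + (n:ℝ) + (v:ℝ) * (m:ℝ) := by
    rw [hC]; ring
  have hsecond : 1 < D * s + C + 2 * ((v:ℝ) * (m:ℝ)) := by
    rw [h2f]; linarith
  have habsne : 0 < |D * s - C| := abs_pos.mpr (sub_ne_zero.mpr hne)
  rcases le_or_gt C 0 with hCle | hCpos
  · have h1 : 1 < D * s - C := by linarith
    calc (1:ℝ) < (D * s - C) * (D * s + C + 2 * ((v:ℝ) * (m:ℝ))) :=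
          one_lt_mul h1.le hsecond
    _ ≤ _ := le_abs_self _
  · have hsum : 0 < D * s + C := by linarith
    have hkey : 1 ≤ |D * s - C| * (D * s + C) := by
      have he : (D * s - C) * (D * s + C) = D ^ 2 * (q : ℝ) - C ^ 2 := by
        rw [← hs2]; ring
      calc (1:ℝ) ≤ |D ^ 2 * (q : ℝ) - C ^ 2| := hgap
      _ = |(D * s - C) * (D * s + C)| := by rw [he]
      _ = |D * s - C| * |D * s + C| := abs_mul _ _
      _ = |D * s - C| * (D * s + C) := by rw [abs_of_pos hsum]
    have hexp : |D * s - C| * (D * s + C + 2 * ((v:ℝ) * (m:ℝ)))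
        = |D * s - C| * (D * s + C) + |D * s - C| * (2 * ((v:ℝ) * (m:ℝ))) := by ring
    have hpos2 : 0 < |D * s - C| * (2 * ((v:ℝ) * (m:ℝ))) :=
      mul_pos habsne (by linarith)
    have hlt : 1 < |D * s - C| * (D * s + C + 2 * ((v:ℝ) * (m:ℝ))) := by
      rw [hexp]; linarith
    calc (1:ℝ) < |D * s - C| * (D * s + C + 2 * ((v:ℝ) * (m:ℝ))) := hlt
    _ = |D * s - C| * |D * s + C + 2 * ((v:ℝ) * (m:ℝ))| := by
          rw [abs_of_pos (by linarith : 0 < D * s + C + 2 * ((v:ℝ) * (m:ℝ)))]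
    _ = |(D * s - C) * (D * s + C + 2 * ((v:ℝ) * (m:ℝ)))| := (abs_mul _ _).symm
end

section
/- Let c be a real number with 1 < c < 2 and let θ > 1 be an irrational real number. Then for every ε > 0 there exist positive integers a and b such that 0 < |θ^c·b^c − a^c| < ε. (Indeed, if |θ − a/b| < 1/b², then by the mean value theorem |θ^c b^c − a^c| = c·z^{c−1}·|θ b − a| for some z between θb and a, giving a bound O(b^{c−2}).) -/
/-!
Dirichlet's theorem gives, for every `n`, positive integers `a, b` with `b ≤ n` and
`|bθ - a| ≤ 1/(n+1)`. Since `x ↦ xᶜ` is convex with derivative `c xᶜ⁻¹` and `a ≤ (θ + 1) n`,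
its tangent lines bound `|(θb)ᶜ - aᶜ|` by `c ((θ + 1) n)ᶜ⁻¹ / n`, a constant times `nᶜ⁻²`, which
tends to `0` because `c < 2`. Irrationality of `θ` keeps `(θb)ᶜ ≠ aᶜ`.
-/

open Real Filter Topology

lemma rpow_add_mul_rpow_sub_one_mul_sub_le {c : ℝ} (hc : 1 ≤ c) {u v : ℝ} (hu : 0 < u)
    (hv : 0 ≤ v) : u ^ c + c * u ^ (c - 1) * (v - u) ≤ v ^ c := by
  have hbernoulli : 1 + c * (v / u - 1) ≤ (v / u) ^ c := by
    simpa using one_add_mul_self_le_rpow_one_add (s := v / u - 1)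
      (by linarith [div_nonneg hv hu.le]) hc
  have huc : 0 < u ^ c := rpow_pos_of_pos hu c
  calc u ^ c + c * u ^ (c - 1) * (v - u) = (1 + c * (v / u - 1)) * u ^ c := by
        rw [rpow_sub hu, rpow_one]; field_simp
    _ ≤ (v / u) ^ c * u ^ c := mul_le_mul_of_nonneg_right hbernoulli huc.le
    _ = v ^ c := by rw [div_rpow hv hu.le, div_mul_cancel₀ _ huc.ne']

lemma abs_rpow_sub_rpow_le {c : ℝ} (hc : 1 ≤ c) {x y : ℝ} (hx : 0 < x) (hy : 0 < y) :
    |x ^ c - y ^ c| ≤ c * max x y ^ (c - 1) * |x - y| := by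
  wlog hyx : y ≤ x generalizing x y
  · rw [abs_sub_comm, max_comm, abs_sub_comm x]
    exact this hy hx (le_of_not_ge hyx)
  have hc0 : 0 ≤ c := by linarith
  rw [max_eq_left hyx, abs_of_nonneg (sub_nonneg.2 hyx),
    abs_of_nonneg (sub_nonneg.2 (rpow_le_rpow hy.le hyx hc0))]
  linarith [rpow_add_mul_rpow_sub_one_mul_sub_le hc hx hy.le]

lemma exists_pos_nat_abs_mul_sub_le {θ : ℝ} (hθ : 1 < θ) {n : ℕ} (hn : 0 < n) :
    ∃ a b : ℕ, 0 < a ∧ 0 < b ∧ b ≤ n ∧ |b * θ - a| ≤ 1 / (n + 1) := by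
  obtain ⟨j, k, hk, hkn, hjk⟩ := exists_int_int_abs_mul_sub_le θ hn
  lift k to ℕ using hk.le
  push_cast at hjk
  have hn1 : 1 / ((n : ℝ) + 1) ≤ 1 := by
    rw [div_le_one (by positivity)]; linarith [(Nat.cast_nonneg n : (0 : ℝ) ≤ n)]
  have hkθ : 1 < (k : ℝ) * θ :=
    one_lt_mul_of_le_of_lt (by exact_mod_cast hk) hθ
  have hj : 0 < j := by
    have : (0 : ℝ) < j := by linarith [(abs_le.1 hjk).2]
    exact_mod_cast this
  lift j to ℕ using hj.le
  exact ⟨j, k, by exact_mod_cast hj, by exact_mod_cast hk, by exact_mod_cast hkn,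
    by exact_mod_cast hjk⟩

lemma abs_rpow_mul_natCast_rpow_sub_le {c θ : ℝ} (hc : 1 ≤ c) (hθ : 0 < θ) {a b n : ℕ}
    (ha : 0 < a) (hb : 0 < b) (hbn : b ≤ n) (happrox : |b * θ - a| ≤ 1 / (n + 1)) :
    |θ ^ c * (b : ℝ) ^ c - (a : ℝ) ^ c| ≤ c * (θ + 1) ^ (c - 1) * (n : ℝ) ^ (c - 2) := by
  have hb' : (0 : ℝ) < b := by exact_mod_cast hb
  have hn : (0 : ℝ) < n := hb'.trans_le (by exact_mod_cast hbn)
  have hbn' : (b : ℝ) ≤ n := by exact_mod_cast hbn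
  have happrox' : |θ * b - a| ≤ 1 / n := by
    rw [mul_comm]
    exact happrox.trans (one_div_le_one_div_of_le hn (by linarith))
  have hmax : max (θ * b) a ≤ (θ + 1) * n := by
    have hθbn : θ * b ≤ θ * n := mul_le_mul_of_nonneg_left hbn' hθ.le
    have ha_le : (a : ℝ) ≤ θ * b + 1 / n := by linarith [(abs_le.1 happrox').1]
    have hn_inv : 1 / (n : ℝ) ≤ n := by
      rw [div_le_iff₀ hn]; nlinarith [(by exact_mod_cast hb.trans_le hbn : (1 : ℝ) ≤ n)]
    exact max_le (by linarith) (by linarith)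
  calc |θ ^ c * (b : ℝ) ^ c - (a : ℝ) ^ c|
      = |(θ * b) ^ c - (a : ℝ) ^ c| := by rw [mul_rpow hθ.le hb'.le]
    _ ≤ c * max (θ * b) a ^ (c - 1) * |θ * b - a| :=
        abs_rpow_sub_rpow_le hc (by positivity) (by exact_mod_cast ha)
    _ ≤ c * ((θ + 1) * n) ^ (c - 1) * (1 / n) := by gcongr
    _ = c * (θ + 1) ^ (c - 1) * (n : ℝ) ^ (c - 2) := by
        rw [mul_rpow (by linarith) hn.le, show c - 2 = c - 1 - 1 by ring,
          rpow_sub_one hn.ne' (c - 1)]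
        ring

lemma rpow_mul_natCast_rpow_sub_natCast_rpow_ne_zero {c θ : ℝ} (hc : c ≠ 0) (hθ : 0 < θ)
    (hirr : Irrational θ) (a : ℕ) {b : ℕ} (hb : b ≠ 0) :
    θ ^ c * (b : ℝ) ^ c - (a : ℝ) ^ c ≠ 0 := by
  rw [← mul_rpow hθ.le b.cast_nonneg, sub_ne_zero,
    Ne, rpow_left_inj (by positivity) a.cast_nonneg hc]
  exact (hirr.mul_natCast hb).ne_nat a

/-- The content of the proof of Theorem 5: for `1 < c < 2` and an irrational `θ > 1`,
the quantity `|θᶜbᶜ − aᶜ|` can be made arbitrarily small (but nonzero) with positive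
integers `a, b`. -/
theorem stmt_14 (c : ℝ) (hc1 : 1 < c) (hc2 : c < 2)
    (θ : ℝ) (hθ : 1 < θ) (hirr : Irrational θ) :
    ∀ ε > 0, ∃ a b : ℕ, 0 < a ∧ 0 < b ∧
      0 < |θ ^ c * (b : ℝ) ^ c - (a : ℝ) ^ c| ∧
      |θ ^ c * (b : ℝ) ^ c - (a : ℝ) ^ c| < ε := by
  intro ε hε
  have hbound_tendsto : Tendsto (fun n : ℕ ↦ c * (θ + 1) ^ (c - 1) * (n : ℝ) ^ (c - 2))
      atTop (𝓝 0) := by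
    have h := (tendsto_rpow_neg_atTop (by linarith : 0 < 2 - c)).comp
      tendsto_natCast_atTop_atTop
    simpa using h.const_mul (c * (θ + 1) ^ (c - 1))
  obtain ⟨n, hnε, hn⟩ :=
    ((hbound_tendsto.eventually (gt_mem_nhds hε)).and (eventually_gt_atTop 0)).exists
  obtain ⟨a, b, ha, hb, hbn, happrox⟩ := exists_pos_nat_abs_mul_sub_le hθ hn
  refine ⟨a, b, ha, hb, abs_pos.2 ?_, ?_⟩
  · exact rpow_mul_natCast_rpow_sub_natCast_rpow_ne_zero (by linarith) (by linarith) hirr a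
      hb.ne'
  · exact (abs_rpow_mul_natCast_rpow_sub_le hc1.le (by linarith) ha hb hbn happrox).trans_lt
      hnε
end

section
/- Let u, v, x, y be positive integers with (u, v) ≠ (x, y). Then |(u + v·√2)² − (x + y·√2)²| > 1. -/
/-- The key inequality in Example 1 of the proof of Theorem 6: for positive integers
`u, v, x, y` with `(u, v) ≠ (x, y)` one has `|(u + v√2)² − (x + y√2)²| > 1`. -/
theorem stmt_15 (u v x y : ℕ) (hu : 0 < u) (hv : 0 < v) (hx : 0 < x) (hy : 0 < y)
    (hne : (u, v) ≠ (x, y)) :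
    1 < |((u : ℝ) + (v : ℝ) * Real.sqrt 2) ^ 2 - ((x : ℝ) + (y : ℝ) * Real.sqrt 2) ^ 2| := by
  set s := Real.sqrt 2 with hs
  have hs2 : s ^ 2 = 2 := Real.sq_sqrt (by norm_num)
  have hs0 : 0 < s := Real.sqrt_pos.mpr (by norm_num)
  set p : ℤ := (u : ℤ) - x with hp
  set q : ℤ := (v : ℤ) - y with hq
  have hpq : ¬(p = 0 ∧ q = 0) := by
    rintro ⟨h1, h2⟩
    exact hne (by simp only [Prod.mk.injEq]; omega)
  have hN : p ^ 2 - 2 * q ^ 2 ≠ 0 := by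
    intro h
    rcases eq_or_ne q 0 with hq0 | hq0
    · exact hpq ⟨by nlinarith [sq_nonneg p], hq0⟩
    · apply irrational_sqrt_two
      set r : ℚ := (p : ℚ) / (q : ℚ) with hr
      have hqQ : ((q : ℚ)) ≠ 0 := Int.cast_ne_zero.mpr hq0
      have hpq2 : (p : ℚ) ^ 2 = 2 * (q : ℚ) ^ 2 := by
        have := congrArg (fun z : ℤ => (z : ℚ)) h
        push_cast at this; linarith
      have hr2Q : r ^ 2 = 2 := by
        rw [hr]; field_simp; linarith
      have hr2 : ((r : ℝ)) ^ 2 = 2 := by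
        have := congrArg (fun z : ℚ => (z : ℝ)) hr2Q
        push_cast at this; linarith
      refine ⟨|r|, ?_⟩
      have habs : ((|r| : ℚ) : ℝ) = |(r : ℝ)| := Rat.cast_abs r
      rw [habs]
      nlinarith [abs_nonneg ((r : ℝ)), sq_abs ((r : ℝ))]
  -- key real quantities
  set P : ℝ := (p : ℝ) with hP
  set Q : ℝ := (q : ℝ) with hQ
  have hPval : P = (u : ℝ) - x := by rw [hP, hp]; push_cast; ring
  have hQval : Q = (v : ℝ) - y := by rw [hQ, hq]; push_cast; ring
  have hN1 : (1 : ℝ) ≤ |P ^ 2 - 2 * Q ^ 2| := by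
    have : (1 : ℤ) ≤ |p ^ 2 - 2 * q ^ 2| := Int.one_le_abs (by omega)
    calc (1 : ℝ) ≤ ((|p ^ 2 - 2 * q ^ 2| : ℤ) : ℝ) := by exact_mod_cast this
      _ = |P ^ 2 - 2 * Q ^ 2| := by rw [hP, hQ]; push_cast; ring_nf
  have hprod : |P + Q * s| * |P - Q * s| = |P ^ 2 - 2 * Q ^ 2| := by
    rw [← abs_mul]; congr 1; nlinarith [hs2]
  -- bounds
  have hd2 : |P - Q * s| ≤ |P| + |Q| * s := by
    calc |P - Q * s| ≤ |P| + |Q * s| := abs_sub P (Q * s)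
      _ = |P| + |Q| * s := by rw [abs_mul, abs_of_pos hs0]
  have hu1 : (1 : ℝ) ≤ (u : ℝ) := by exact_mod_cast hu
  have hv1 : (1 : ℝ) ≤ (v : ℝ) := by exact_mod_cast hv
  have hx1 : (1 : ℝ) ≤ (x : ℝ) := by exact_mod_cast hx
  have hy1 : (1 : ℝ) ≤ (y : ℝ) := by exact_mod_cast hy
  have hPb : |P| + 2 ≤ (u : ℝ) + x := by
    rw [hPval]; rcases abs_cases ((u : ℝ) - x) with ⟨h1, _⟩ | ⟨h1, _⟩ <;> rw [h1] <;> linarith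
  have hQb : |Q| + 2 ≤ (v : ℝ) + y := by
    rw [hQval]; rcases abs_cases ((v : ℝ) - y) with ⟨h1, _⟩ | ⟨h1, _⟩ <;> rw [h1] <;> linarith
  set A : ℝ := (u : ℝ) + v * s with hA
  set B : ℝ := (x : ℝ) + y * s with hB
  have hAB : A + B = (u : ℝ) + x + ((v : ℝ) + y) * s := by ring
  have hsum : |P| + |Q| * s < A + B := by
    rw [hAB]; nlinarith [abs_nonneg Q]
  have hdiff : A - B = P + Q * s := by rw [hPval, hQval]; ring
  have hABpos : 0 < A + B := by
    rw [hAB]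
    have h2 : 0 < ((v : ℝ) + y) * s := mul_pos (by linarith) hs0
    linarith
  have hgoal : |A ^ 2 - B ^ 2| = |P + Q * s| * (A + B) := by
    rw [← hdiff, show A ^ 2 - B ^ 2 = (A - B) * (A + B) by ring, abs_mul, abs_of_pos hABpos]
  rw [hgoal]
  have h1 : 1 ≤ |P + Q * s| * |P - Q * s| := hprod ▸ hN1
  have hd1pos : 0 < |P + Q * s| := by
    rcases (abs_nonneg (P + Q * s)).lt_or_eq with h | h
    · exact h
    · exfalso; rw [← h] at h1; simp at h1; linarith
  have hd2lt : |P - Q * s| < A + B := lt_of_le_of_lt hd2 hsum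
  calc 1 ≤ |P + Q * s| * |P - Q * s| := h1
    _ < |P + Q * s| * (A + B) := by exact mul_lt_mul_of_pos_left hd2lt hd1pos
end
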